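/- arXiv:1010.1653 — 9 statements merged into one kernel-verified Lean document; each statement's English description precedes it below -/
import Mathlib

section
/- Let m ≥ 2 be an integer, R₀ > 0 and λ > 0 real numbers, and g : [R₀, ∞) → ℝ a continuously differentiable function with g(r) > 0 for all r ≥ R₀, such that ∫_{R₀}^∞ g(t)^{1-m} dt = +∞ (i.e. 1/g^{m-1} is not integrable at infinity). Let h : [R₀, ∞) → ℝ be a bounded, twice continuously differentiable function with h(r) > 0 for all r ≥ R₀, h(R₀) = 1, and h''(r) + (m-1)·(g'(r)/g(r))·h'(r) = λ·h(r) for all r ≥ R₀. Then h'(r) < 0 for every r ≥ R₀; in particular h is strictly decreasing on [R₀, ∞). -/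
open Set MeasureTheory Filter Topology

/-!
The operator `h'' + (m-1)(g'/g)h'` equals `(g^{m-1}h')'/g^{m-1}`, so along a positive solution
of `h'' + (m-1)(g'/g)h' = λh` the flux `g^{m-1}h'` has derivative `λ g^{m-1} h > 0` and is
strictly increasing. If it were `≥ 0` somewhere, it would be `≥ c > 0` further out, so
`h' ≥ c / g^{m-1}` there; integrating, boundedness of `h` would make `1/g^{m-1}` integrable at
infinity. Hence the flux, and with it `h'`, is negative.
-/

theorem HasDerivAt.pow_mul_radial {g φ : ℝ → ℝ} {g' φ' x : ℝ} (k : ℕ)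
    (hg : HasDerivAt g g' x) (hφ : HasDerivAt φ φ' x) (hgx : g x ≠ 0) :
    HasDerivAt (fun r => g r ^ k * φ r) (g x ^ k * (φ' + k * (g' / g x) * φ x)) x := by
  refine ((hg.fun_pow k).mul hφ).congr_deriv ?_
  rcases k with _ | k
  · simp
  · rw [pow_succ]
    field_simp
    push_cast
    ring

theorem hasDerivAt_derivWithin_Ici {h : ℝ → ℝ} {a x : ℝ} (hh : ContDiffOn ℝ 2 h (Ici a))
    (hx : a < x) : HasDerivAt (derivWithin h (Ici a)) (deriv (deriv h) x) x := by
  have hh' : ContDiffOn ℝ 1 (deriv h) (Ioi a) :=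
    (hh.mono Ioi_subset_Ici_self).deriv_of_isOpen isOpen_Ioi (by norm_num)
  refine ((hh'.differentiableOn one_ne_zero).differentiableAt (Ioi_mem_nhds hx)).hasDerivAt
    |>.congr_of_eventuallyEq ?_
  filter_upwards [Ioi_mem_nhds hx] with y hy using derivWithin_of_mem_nhds (Ici_mem_nhds hy)

/-- `deriv h a` is a two-sided derivative, while `h` is only controlled on `[a, ∞)`; if `h` is not
differentiable at `a` then `deriv h a = 0`, which the second alternative rules out through the
continuity of `deriv h` at `a`. -/
theorem deriv_eq_derivWithin_Ici {h : ℝ → ℝ} {a : ℝ}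
    (hcont : ContinuousWithinAt (derivWithin h (Ici a)) (Ici a) a)
    (hne : deriv h a ≠ 0 ∨ deriv (deriv h) a ≠ 0) :
    deriv h a = derivWithin h (Ici a) a := by
  rcases hne with hne | hne
  · exact ((differentiableAt_of_deriv_ne_zero hne).derivWithin
      (uniqueDiffOn_Ici a a self_mem_Ici)).symm
  · have hright : Tendsto (deriv h) (𝓝[>] a) (𝓝 (deriv h a)) :=
      (differentiableAt_of_deriv_ne_zero hne).continuousAt.tendsto.mono_left nhdsWithin_le_nhds
    have hright' : Tendsto (deriv h) (𝓝[>] a) (𝓝 (derivWithin h (Ici a) a)) := by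
      refine (hcont.mono Ioi_subset_Ici_self).tendsto.congr' ?_
      filter_upwards [self_mem_nhdsWithin] with y hy using derivWithin_of_mem_nhds (Ici_mem_nhds hy)
    exact tendsto_nhds_unique hright hright'

theorem integrableOn_Ioi_of_const_mul_le_deriv {f f' ψ : ℝ → ℝ} {a c C : ℝ} (hc : 0 < c)
    (hf : ∀ x ∈ Ici a, HasDerivAt f (f' x) x) (hψ : ContinuousOn ψ (Ici a))
    (hψ_nonneg : ∀ x ∈ Ici a, 0 ≤ ψ x) (hψf : ∀ x ∈ Ici a, c * ψ x ≤ f' x)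
    (hC : ∀ x ∈ Ici a, f x ≤ C) : IntegrableOn ψ (Ioi a) := by
  have hψ_Icc : ∀ b, IntegrableOn ψ (Icc a b) := fun b =>
    (hψ.mono Icc_subset_Ici_self).integrableOn_Icc
  refine integrableOn_Ioi_of_intervalIntegral_norm_bounded ((C - f a) / c) a
    (fun b => (hψ_Icc b).mono_set Ioc_subset_Icc_self) tendsto_id ?_
  filter_upwards [eventually_ge_atTop a] with b hab
  have hint : c * ∫ x in a..b, ψ x ≤ f b - f a := by
    rw [← intervalIntegral.integral_const_mul]
    refine intervalIntegral.integral_le_sub_of_hasDeriv_right_of_le hab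
      (fun x hx => (hf x hx.1).continuousAt.continuousWithinAt)
      (fun x hx => (hf x hx.1.le).hasDerivWithinAt) ((hψ_Icc b).const_mul c)
      (fun x hx => hψf x hx.1.le)
  have hnorm : ∫ x in a..b, ‖ψ x‖ = ∫ x in a..b, ψ x :=
    intervalIntegral.integral_congr fun x hx =>
      Real.norm_of_nonneg (hψ_nonneg x (uIcc_of_le hab ▸ hx).1)
  rw [hnorm, le_div_iff₀ hc, mul_comm]
  linarith [hC b hab]

theorem neg_of_strictMonoOn_mul_of_not_integrableOn_inv {w f f' : ℝ → ℝ} {a C : ℝ}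
    (hw : ContinuousOn w (Ici a)) (hw_pos : ∀ x ∈ Ici a, 0 < w x)
    (hw_int : ¬ IntegrableOn (fun t => (w t)⁻¹) (Ici a))
    (hF : StrictMonoOn (fun x => w x * f' x) (Ici a))
    (hf : ∀ x ∈ Ioi a, HasDerivAt f (f' x) x) (hC : ∀ x ∈ Ici a, f x ≤ C) :
    ∀ r ∈ Ici a, f' r < 0 := by
  intro r hr
  by_contra! hr_nonneg
  set b := r + 1
  have hab : a < b := lt_add_of_le_of_pos hr one_pos
  have hb_pos : 0 < w b * f' b :=
    (mul_nonneg (hw_pos r hr).le hr_nonneg).trans_lt (hF hr hab.le (lt_add_one r))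
  have hw_inv : ContinuousOn (fun t => (w t)⁻¹) (Ici a) :=
    hw.inv₀ fun x hx => (hw_pos x hx).ne'
  have hb_le : ∀ x ∈ Ici b, w b * f' b * (w x)⁻¹ ≤ f' x := by
    intro x hx
    have hxa : x ∈ Ici a := hab.le.trans hx
    rw [← div_eq_mul_inv, div_le_iff₀ (hw_pos x hxa), mul_comm (f' x)]
    exact hF.monotoneOn hab.le hxa hx
  have hIoi : IntegrableOn (fun t => (w t)⁻¹) (Ioi b) :=
    integrableOn_Ioi_of_const_mul_le_deriv hb_pos (fun x hx => hf x (hab.trans_le hx))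
      (hw_inv.mono (Ici_subset_Ici.2 hab.le))
      (fun x hx => (inv_pos.2 (hw_pos x (hab.le.trans hx))).le) hb_le
      (fun x hx => hC x (hab.le.trans hx))
  have hIcc : IntegrableOn (fun t => (w t)⁻¹) (Icc a b) :=
    (hw_inv.mono Icc_subset_Ici_self).integrableOn_Icc
  exact hw_int (Icc_union_Ioi_eq_Ici hab.le ▸ hIcc.union hIoi)

theorem strictMonoOn_pow_mul_derivWithin_of_ode {g h : ℝ → ℝ} {a lam : ℝ} (k : ℕ)
    (hlam : 0 < lam) (hg : ContDiffOn ℝ 1 g (Ici a)) (hg_pos : ∀ r ∈ Ici a, 0 < g r)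
    (hh : ContDiffOn ℝ 2 h (Ici a)) (hh_pos : ∀ r ∈ Ici a, 0 < h r)
    (hode : ∀ r ∈ Ici a,
      deriv (deriv h) r + k * (deriv g r / g r) * deriv h r = lam * h r) :
    StrictMonoOn (fun r => g r ^ k * derivWithin h (Ici a) r) (Ici a) := by
  have hflux_cont : ContinuousOn (fun r => g r ^ k * derivWithin h (Ici a) r) (Ici a) :=
    (hg.continuousOn.pow k).mul (hh.continuousOn_derivWithin (uniqueDiffOn_Ici a) one_le_two)
  refine strictMonoOn_of_deriv_pos (convex_Ici a) hflux_cont fun x hx => ?_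
  rw [interior_Ici] at hx
  have hxa : x ∈ Ici a := Ioi_subset_Ici_self hx
  have hg_deriv : HasDerivAt g (deriv g x) x :=
    ((hg.differentiableOn one_ne_zero).differentiableAt (Ici_mem_nhds hx)).hasDerivAt
  have hflux_deriv :=
    hg_deriv.pow_mul_radial k (hasDerivAt_derivWithin_Ici hh hx) (hg_pos x hxa).ne'
  rw [derivWithin_of_mem_nhds (Ici_mem_nhds hx), hode x hxa] at hflux_deriv
  rw [hflux_deriv.deriv]
  have := hg_pos x hxa
  have := hh_pos x hxa
  positivity

theorem stmt_2_general (m : ℕ) (hm : 2 ≤ m) (R₀ lam : ℝ) (hlam : 0 < lam)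
    (g h : ℝ → ℝ)
    (hg : ContDiffOn ℝ 1 g (Set.Ici R₀))
    (hgpos : ∀ r ∈ Set.Ici R₀, 0 < g r)
    (hgint : ¬ MeasureTheory.IntegrableOn (fun t => (g t ^ (m - 1))⁻¹) (Set.Ici R₀))
    (hbdd : ∃ C : ℝ, ∀ r ∈ Set.Ici R₀, h r ≤ C)
    (hh : ContDiffOn ℝ 2 h (Set.Ici R₀))
    (hhpos : ∀ r ∈ Set.Ici R₀, 0 < h r)
    (hode : ∀ r ∈ Set.Ici R₀,
      deriv (deriv h) r + ((m : ℝ) - 1) * (deriv g r / g r) * deriv h r = lam * h r) :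
    (∀ r ∈ Set.Ici R₀, deriv h r < 0) ∧ StrictAntiOn h (Set.Ici R₀) := by
  obtain ⟨C, hC⟩ := hbdd
  have hflux_mono := strictMonoOn_pow_mul_derivWithin_of_ode (m - 1) hlam hg hgpos hh hhpos
    (by rwa [Nat.cast_pred (by omega)])
  have hh_deriv : ∀ x ∈ Ioi R₀, HasDerivAt h (derivWithin h (Ici R₀) x) x := fun x hx =>
    (hh.differentiableOn two_ne_zero x hx.out.le).hasDerivWithinAt.hasDerivAt (Ici_mem_nhds hx)
  have hderivWithin_neg := neg_of_strictMonoOn_mul_of_not_integrableOn_inv (hg.continuousOn.pow _)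
    (fun x hx => pow_pos (hgpos x hx) _) hgint hflux_mono hh_deriv hC
  have hderiv_neg : ∀ r ∈ Ici R₀, deriv h r < 0 := by
    intro r hr
    rcases hr.out.eq_or_lt with rfl | hr
    · have hne : deriv h R₀ ≠ 0 ∨ deriv (deriv h) R₀ ≠ 0 := by
        by_contra! hzero
        have := hode R₀ self_mem_Ici
        rw [hzero.1, hzero.2] at this
        linarith [mul_pos hlam (hhpos R₀ self_mem_Ici)]
      have hφ_cont : ContinuousOn (derivWithin h (Ici R₀)) (Ici R₀) :=
        hh.continuousOn_derivWithin (uniqueDiffOn_Ici R₀) one_le_two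
      exact deriv_eq_derivWithin_Ici (hφ_cont R₀ self_mem_Ici) hne ▸ hderivWithin_neg R₀ self_mem_Ici
    · exact derivWithin_of_mem_nhds (f := h) (Ici_mem_nhds hr) ▸ hderivWithin_neg r hr.le
  exact ⟨hderiv_neg, strictAntiOn_of_deriv_neg (convex_Ici R₀) hh.continuousOn
    fun x hx => hderiv_neg x (interior_subset hx)⟩

/-- on a parabolic model (`1/g^{m-1}` not integrable at infinity),
a bounded positive solution of `h'' + (m-1)(g'/g)h' = λ h` with `h(R₀) = 1`
has `h' < 0` everywhere; in particular `h` is strictly decreasing. -/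
theorem stmt_2 (m : ℕ) (hm : 2 ≤ m) (R₀ lam : ℝ) (hR₀ : 0 < R₀) (hlam : 0 < lam)
    (g h : ℝ → ℝ)
    (hg : ContDiffOn ℝ 1 g (Set.Ici R₀))
    (hgpos : ∀ r ∈ Set.Ici R₀, 0 < g r)
    (hgint : ¬ MeasureTheory.IntegrableOn (fun t => (g t ^ (m - 1))⁻¹) (Set.Ici R₀))
    (hbdd : ∃ C : ℝ, ∀ r ∈ Set.Ici R₀, h r ≤ C)
    (hh : ContDiffOn ℝ 2 h (Set.Ici R₀))
    (hhpos : ∀ r ∈ Set.Ici R₀, 0 < h r)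
    (hval : h R₀ = 1)
    (hode : ∀ r ∈ Set.Ici R₀,
      deriv (deriv h) r + ((m : ℝ) - 1) * (deriv g r / g r) * deriv h r = lam * h r) :
    (∀ r ∈ Set.Ici R₀, deriv h r < 0) ∧ StrictAntiOn h (Set.Ici R₀) :=
  stmt_2_general m hm R₀ lam hlam g h hg hgpos hgint hbdd hh hhpos hode
end

section
/- Let m ≥ 2 be an integer, R₀ > 0 and λ > 0 real numbers, and g : [R₀, ∞) → ℝ a continuously differentiable function with g(r) > 0 for all r ≥ R₀, such that ∫_{R₀}^∞ g(t)^{1-m} dt = +∞. Let h : [R₀, ∞) → ℝ be a bounded, twice continuously differentiable function with h(r) > 0 for all r ≥ R₀ and h''(r) + (m-1)·(g'(r)/g(r))·h'(r) = λ·h(r) for all r ≥ R₀. Then g(r)^{m-1}·h'(r) → 0 as r → +∞. -/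
open Set MeasureTheory Filter Topology

/-! The flux `φ = g^(m-1) h'` satisfies `φ' = λ g^(m-1) h > 0`, since the radial Laplacian is
`(g^(m-1) h')' / g^(m-1)`; so `φ` is increasing. As `h' = φ · g^(1-m)` and `∫ g^(1-m) = ∞`, a positive
lower bound for `φ` on a ray would push `h` above any bound, and a negative upper bound for `φ` on
all of `(R₀, ∞)` would push `h` to `-∞`. Hence `φ ≤ 0` and `φ` increases to `0`. -/

theorem tendsto_intervalIntegral_atTop_of_not_integrableOn {f : ℝ → ℝ} {a b : ℝ}
    (hf : ContinuousOn f (Ici a)) (hf₀ : ∀ t ∈ Ici a, 0 ≤ f t)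
    (hfi : ¬ IntegrableOn f (Ici a)) (hab : a ≤ b) :
    Tendsto (fun x => ∫ t in b..x, f t) atTop atTop := by
  have hloc : ∀ x, IntegrableOn f (Icc b x) := fun x =>
    (hf.mono fun t ht => hab.trans ht.1).integrableOn_Icc
  have hmono : ∀ x y, b ≤ x → x ≤ y → ∫ t in b..x, f t ≤ ∫ t in b..y, f t := fun x y hx hxy =>
    intervalIntegral.integral_mono_interval le_rfl hx hxy
      (ae_restrict_of_forall_mem measurableSet_Ioc fun t ht => hf₀ t (hab.trans ht.1.le))
      ((intervalIntegrable_iff_integrableOn_Ioc_of_le (hx.trans hxy)).2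
        ((hloc y).mono_set Ioc_subset_Icc_self))
  refine tendsto_atTop_atTop.2 fun C => ?_
  by_contra! hC
  refine hfi ?_
  have hIoi : IntegrableOn f (Ioi b) := by
    refine integrableOn_Ioi_of_intervalIntegral_norm_bounded C b
      (fun x => (hloc x).mono_set Ioc_subset_Icc_self) tendsto_id ?_
    filter_upwards [eventually_ge_atTop b] with x hx
    obtain ⟨y, hxy, hy⟩ := hC x
    calc ∫ t in b..x, ‖f t‖ = ∫ t in b..x, f t :=
          intervalIntegral.integral_congr fun t ht =>
            Real.norm_of_nonneg (hf₀ t (hab.trans (uIcc_of_le hx ▸ ht).1))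
      _ ≤ ∫ t in b..y, f t := hmono x y hx hxy
      _ ≤ C := hy.le
  rw [← Icc_union_Ioi_eq_Ici hab]
  exact (hf.mono Icc_subset_Ici_self).integrableOn_Icc.union hIoi

theorem tendsto_atTop_of_mul_le_deriv {f f' w : ℝ → ℝ} {b c : ℝ} (hc : 0 < c)
    (hf : ∀ t ∈ Ici b, HasDerivAt f (f' t) t) (hw : ContinuousOn w (Ici b))
    (hW : Tendsto (fun x => ∫ t in b..x, w t) atTop atTop)
    (hle : ∀ t ∈ Ici b, c * w t ≤ f' t) :
    Tendsto f atTop atTop := by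
  refine tendsto_atTop_mono' atTop ?_ (tendsto_atTop_add_const_left _ (f b) (hW.const_mul_atTop hc))
  filter_upwards [eventually_ge_atTop b] with x hx
  have key : ∫ t in b..x, c * w t ≤ f x - f b :=
    intervalIntegral.integral_le_sub_of_hasDeriv_right_of_le hx
      (fun t ht => (hf t ht.1).continuousAt.continuousWithinAt)
      (fun t ht => (hf t ht.1.le).hasDerivWithinAt)
      ((hw.mono fun t ht => ht.1).integrableOn_Icc.const_mul c)
      fun t ht => hle t ht.1.le
  rw [intervalIntegral.integral_const_mul] at key
  linarith

theorem tendsto_atBot_of_deriv_le_mul {f f' w : ℝ → ℝ} {b c : ℝ} (hc : c < 0)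
    (hf : ∀ t ∈ Ici b, HasDerivAt f (f' t) t) (hw : ContinuousOn w (Ici b))
    (hW : Tendsto (fun x => ∫ t in b..x, w t) atTop atTop)
    (hle : ∀ t ∈ Ici b, f' t ≤ c * w t) :
    Tendsto f atTop atBot := by
  refine tendsto_neg_atTop_iff.1 (tendsto_atTop_of_mul_le_deriv (neg_pos.2 hc)
    (fun t ht => (hf t ht).neg) hw hW fun t ht => ?_)
  linarith [hle t ht]

theorem monotoneOn_Ioi_of_hasDerivAt_nonneg {f f' : ℝ → ℝ} {a : ℝ}
    (hf : ∀ x ∈ Ioi a, HasDerivAt f (f' x) x) (hf' : ∀ x ∈ Ioi a, 0 ≤ f' x) :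
    MonotoneOn f (Ioi a) :=
  monotoneOn_of_hasDerivWithinAt_nonneg (convex_Ioi a)
    (fun x hx => (hf x hx).continuousAt.continuousWithinAt)
    (by simpa only [interior_Ioi] using fun x hx => (hf x hx).hasDerivWithinAt)
    (by simpa only [interior_Ioi] using hf')

theorem tendsto_zero_of_hasDerivAt_mul_of_monotoneOn {f φ w : ℝ → ℝ} {a : ℝ}
    (hf : ∀ t ∈ Ioi a, HasDerivAt f (φ t * w t) t) (hφ : MonotoneOn φ (Ioi a))
    (hw : ContinuousOn w (Ioi a)) (hw₀ : ∀ t ∈ Ioi a, 0 ≤ w t)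
    (hW : ∀ b ∈ Ioi a, Tendsto (fun x => ∫ t in b..x, w t) atTop atTop)
    (hf_above : IsBoundedUnder (· ≤ ·) atTop f) (hf_below : IsBoundedUnder (· ≥ ·) atTop f) :
    Tendsto φ atTop (𝓝 0) := by
  have hIci : ∀ b ∈ Ioi a, Ici b ⊆ Ioi a := fun b hb t ht => mem_Ioi.2 (lt_of_lt_of_le hb ht)
  refine tendsto_order.2 ⟨fun c hc => ?_, fun c hc => ?_⟩
  · by_contra hev
    have hφc : ∀ t ∈ Ioi a, φ t ≤ c := fun t ht => by
      obtain ⟨s, hts, hs⟩ := (not_eventually.1 hev).forall_exists_of_atTop t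
      exact (hφ ht (ht.trans_le hts) hts).trans (not_lt.1 hs)
    have hb : a + 1 ∈ Ioi a := lt_add_one a
    refine not_isBoundedUnder_of_tendsto_atBot (tendsto_atBot_of_deriv_le_mul hc
      (fun t ht => hf t (hIci _ hb ht)) (hw.mono (hIci _ hb)) (hW _ hb) fun t ht => ?_) hf_below
    exact mul_le_mul_of_nonneg_right (hφc t (hIci _ hb ht)) (hw₀ t (hIci _ hb ht))
  · by_contra hev
    obtain ⟨b, hcb, hb⟩ :=
      ((not_eventually.1 hev).and_eventually (eventually_gt_atTop a)).exists
    refine not_isBoundedUnder_of_tendsto_atTop (tendsto_atTop_of_mul_le_deriv hc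
      (fun t ht => hf t (hIci _ hb ht)) (hw.mono (hIci _ hb)) (hW _ hb) fun t ht => ?_) hf_above
    exact mul_le_mul_of_nonneg_right ((not_lt.1 hcb).trans (hφ hb (hIci _ hb ht) ht))
      (hw₀ t (hIci _ hb ht))

theorem HasDerivAt.pow_mul_of_ne_zero {g u : ℝ → ℝ} {g' u' r : ℝ} (n : ℕ)
    (hg : HasDerivAt g g' r) (hu : HasDerivAt u u' r) (hr : g r ≠ 0) :
    HasDerivAt (fun s => g s ^ n * u s) (g r ^ n * (u' + n * (g' / g r) * u r)) r := by
  refine ((hg.pow n).mul hu).congr_deriv ?_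
  rcases n with _ | n
  · simp
  · simp only [Pi.pow_apply, Nat.add_sub_cancel]
    field_simp
    push_cast
    ring

theorem stmt_3_general (m : ℕ) (hm : 2 ≤ m) (R₀ lam : ℝ) (hlam : 0 < lam)
    (g h : ℝ → ℝ)
    (hg : ContDiffOn ℝ 1 g (Set.Ici R₀))
    (hgpos : ∀ r ∈ Set.Ici R₀, 0 < g r)
    (hgint : ¬ MeasureTheory.IntegrableOn (fun t => (g t ^ (m - 1))⁻¹) (Set.Ici R₀))
    (hbdd : ∃ C : ℝ, ∀ r ∈ Set.Ici R₀, h r ≤ C)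
    (hh : ContDiffOn ℝ 2 h (Set.Ici R₀))
    (hhpos : ∀ r ∈ Set.Ici R₀, 0 < h r)
    (hode : ∀ r ∈ Set.Ici R₀,
      deriv (deriv h) r + ((m : ℝ) - 1) * (deriv g r / g r) * deriv h r = lam * h r) :
    Filter.Tendsto (fun r => g r ^ (m - 1) * deriv h r) Filter.atTop (nhds 0) := by
  obtain ⟨C, hC⟩ := hbdd
  have hgpos' : ∀ r ∈ Ioi R₀, 0 < g r := fun r hr => hgpos r (Ioi_subset_Ici_self hr)
  have hg' : ∀ r ∈ Ioi R₀, HasDerivAt g (deriv g r) r := fun r hr =>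
    ((hg.contDiffAt (Ici_mem_nhds hr)).differentiableAt one_ne_zero).hasDerivAt
  have hh' : ∀ r ∈ Ioi R₀, HasDerivAt h (deriv h r) r := fun r hr =>
    ((hh.contDiffAt (Ici_mem_nhds hr)).differentiableAt two_ne_zero).hasDerivAt
  have hh'' : ∀ r ∈ Ioi R₀, HasDerivAt (deriv h) (deriv (deriv h) r) r := fun r hr =>
    (((hh.contDiffAt (Ici_mem_nhds hr)).derivWithin (m := 1) le_rfl).differentiableAt
      one_ne_zero).hasDerivAt
  have hflux : ∀ r ∈ Ioi R₀, HasDerivAt (fun s => g s ^ (m - 1) * deriv h s)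
      (g r ^ (m - 1) * (lam * h r)) r := fun r hr => by
    have := (hg' r hr).pow_mul_of_ne_zero (m - 1) (hh'' r hr) (hgpos' r hr).ne'
    rwa [Nat.cast_pred (by omega), hode r (Ioi_subset_Ici_self hr)] at this
  have hw : ContinuousOn (fun t => (g t ^ (m - 1))⁻¹) (Ici R₀) :=
    (hg.continuousOn.pow _).inv₀ fun t ht => pow_ne_zero _ (hgpos t ht).ne'
  have hw₀ : ∀ t ∈ Ici R₀, 0 ≤ (g t ^ (m - 1))⁻¹ := fun t ht =>
    inv_nonneg.2 (pow_nonneg (hgpos t ht).le _)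
  refine tendsto_zero_of_hasDerivAt_mul_of_monotoneOn (f := h)
    (fun r hr => (hh' r hr).congr_deriv (by field_simp [(hgpos' r hr).ne']))
    (monotoneOn_Ioi_of_hasDerivAt_nonneg hflux fun r hr => ?_)
    (hw.mono Ioi_subset_Ici_self) (fun t ht => hw₀ t (Ioi_subset_Ici_self ht))
    (fun b hb => tendsto_intervalIntegral_atTop_of_not_integrableOn hw hw₀ hgint hb.le)
    (isBoundedUnder_of_eventually_le ((eventually_ge_atTop R₀).mono hC))
    (isBoundedUnder_of_eventually_ge ((eventually_ge_atTop R₀).mono fun r hr => (hhpos r hr).le))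
  have := hhpos r (Ioi_subset_Ici_self hr)
  have := hgpos' r hr
  positivity

/-- under the same parabolicity hypothesis, for a bounded positive
solution of `h'' + (m-1)(g'/g)h' = λ h` one has `g^{m-1} h' → 0` at infinity. -/
theorem stmt_3 (m : ℕ) (hm : 2 ≤ m) (R₀ lam : ℝ) (hR₀ : 0 < R₀) (hlam : 0 < lam)
    (g h : ℝ → ℝ)
    (hg : ContDiffOn ℝ 1 g (Set.Ici R₀))
    (hgpos : ∀ r ∈ Set.Ici R₀, 0 < g r)
    (hgint : ¬ MeasureTheory.IntegrableOn (fun t => (g t ^ (m - 1))⁻¹) (Set.Ici R₀))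
    (hbdd : ∃ C : ℝ, ∀ r ∈ Set.Ici R₀, h r ≤ C)
    (hh : ContDiffOn ℝ 2 h (Set.Ici R₀))
    (hhpos : ∀ r ∈ Set.Ici R₀, 0 < h r)
    (hode : ∀ r ∈ Set.Ici R₀,
      deriv (deriv h) r + ((m : ℝ) - 1) * (deriv g r / g r) * deriv h r = lam * h r) :
    Filter.Tendsto (fun r => g r ^ (m - 1) * deriv h r) Filter.atTop (nhds 0) :=
  stmt_3_general m hm R₀ lam hlam g h hg hgpos hgint hbdd hh hhpos hode
end

section
/- Let m ≥ 2 be an integer, R₀ > 0 and λ > 0 real numbers, and g : [R₀, ∞) → ℝ a continuously differentiable function with g(r) > 0 for all r ≥ R₀, such that ∫_{R₀}^∞ g(t)^{1-m} dt = +∞ and ∫_{R₀}^∞ g(t)^{m-1} dt = +∞ (i.e. neither 1/g^{m-1} nor g^{m-1} is integrable at infinity). Let h : [R₀, ∞) → ℝ be a bounded, twice continuously differentiable function with h(r) > 0 for all r ≥ R₀ and h''(r) + (m-1)·(g'(r)/g(r))·h'(r) = λ·h(r) for all r ≥ R₀. Then h(r) → 0 as r → +∞. -/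
/-!
Write `P = g ^ (m - 1)`. The equation says that the flux `F = P h'` satisfies `F' = λ P h > 0`,
so `F` is increasing. If `F r > 0` for some `r`, then `h' ≥ F r / P` beyond `r`, and since `h` is
bounded this makes `1 / P` integrable; hence `F ≤ 0`, so `h` is nonincreasing and decreases to
some `L ≥ 0`. If `L > 0`, then `F' ≥ λ L P` while `F ≤ 0`, which makes `P` integrable.
-/

open Set MeasureTheory Filter Topology

lemma hasDerivAt_pow_mul {g h' : ℝ → ℝ} {g' h'' y : ℝ} (hg : HasDerivAt g g' y)
    (hh : HasDerivAt h' h'' y) (hy : g y ≠ 0) (n : ℕ) :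
    HasDerivAt (fun t => g t ^ n * h' t) (g y ^ n * (h'' + n * (g' / g y) * h' y)) y := by
  refine ((hg.fun_pow n).fun_mul hh).congr_deriv ?_
  rcases n with _ | n
  · simp
  · field_simp
    push_cast
    ring

lemma ContDiffOn.hasDerivAt_deriv {f : ℝ → ℝ} {s : Set ℝ} {n : WithTop ℕ∞} {x : ℝ}
    (hf : ContDiffOn ℝ n f s) (hn : n ≠ 0) (hs : s ∈ 𝓝 x) : HasDerivAt f (deriv f x) x :=
  ((hf.contDiffAt hs).differentiableAt hn).hasDerivAt

lemma hasDerivAt_pow_mul_deriv_of_ode {g h : ℝ → ℝ} {a lam t : ℝ} {n : ℕ}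
    (hg : ContDiffOn ℝ 1 g (Ici a)) (hgpos : ∀ r ∈ Ici a, 0 < g r) (hh : ContDiffOn ℝ 2 h (Ici a))
    (hode : ∀ r ∈ Ici a, deriv (deriv h) r + n * (deriv g r / g r) * deriv h r = lam * h r)
    (ht : a < t) : HasDerivAt (fun s => g s ^ n * deriv h s) (lam * (g t ^ n * h t)) t := by
  have hh' : ContDiffOn ℝ 1 (deriv h) (Ioi a) :=
    (hh.mono Ioi_subset_Ici_self).deriv_of_isOpen isOpen_Ioi (by norm_num)
  refine (hasDerivAt_pow_mul (hg.hasDerivAt_deriv one_ne_zero (Ici_mem_nhds ht))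
    (hh'.hasDerivAt_deriv one_ne_zero (Ioi_mem_nhds ht)) (hgpos t ht.le).ne' n).congr_deriv ?_
  rw [hode t ht.le]
  ring

lemma integrableOn_Ici_of_le_deriv_of_bddAbove {u u' φ : ℝ → ℝ} {b C : ℝ}
    (hu : ∀ t ∈ Ici b, HasDerivAt u (u' t) t) (hC : ∀ t ∈ Ici b, u t ≤ C)
    (hφ : ContinuousOn φ (Ici b)) (hφ0 : ∀ t ∈ Ici b, 0 ≤ φ t) (hφu : ∀ t ∈ Ici b, φ t ≤ u' t) :
    IntegrableOn φ (Ici b) := by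
  rw [integrableOn_Ici_iff_integrableOn_Ioi]
  refine integrableOn_Ioi_of_intervalIntegral_norm_bounded (C - u b) b
    (fun x => (hφ.mono Icc_subset_Ici_self).integrableOn_Icc.mono_set Ioc_subset_Icc_self)
    tendsto_id ?_
  filter_upwards [eventually_ge_atTop b] with x hx
  have hIcc : Icc b x ⊆ Ici b := Icc_subset_Ici_self
  calc ∫ t in b..x, ‖φ t‖ = ∫ t in b..x, φ t :=
        intervalIntegral.integral_congr fun t ht =>
          Real.norm_of_nonneg (hφ0 t (by rw [uIcc_of_le hx] at ht; exact ht.1))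
    _ ≤ u x - u b :=
        intervalIntegral.integral_le_sub_of_hasDeriv_right_of_le hx
          (fun t ht => (hu t (hIcc ht)).continuousAt.continuousWithinAt)
          (fun t ht => (hu t (hIcc (Ioo_subset_Icc_self ht))).hasDerivWithinAt)
          (hφ.mono hIcc).integrableOn_Icc (fun t ht => hφu t (hIcc (Ioo_subset_Icc_self ht)))
    _ ≤ C - u b := by linarith [hC x hx]

lemma integrableOn_Ici_of_continuousOn_of_integrableOn_Ici {φ : ℝ → ℝ} {a b : ℝ} (hab : a ≤ b)
    (hφ : ContinuousOn φ (Ici a)) (hb : IntegrableOn φ (Ici b)) : IntegrableOn φ (Ici a) := by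
  rw [← Icc_union_Ici_eq_Ici hab]
  exact (hφ.mono Icc_subset_Ici_self).integrableOn_Icc.union hb

lemma mul_deriv_nonpos_of_monotoneOn {P h h' : ℝ → ℝ} {a C r : ℝ} (hP : ContinuousOn P (Ici a))
    (hPpos : ∀ t ∈ Ici a, 0 < P t) (hPint : ¬ IntegrableOn (fun t => (P t)⁻¹) (Ici a))
    (hh : ∀ t ∈ Ioi a, HasDerivAt h (h' t) t) (hC : ∀ t ∈ Ici a, h t ≤ C)
    (hmono : MonotoneOn (fun t => P t * h' t) (Ioi a)) (hr : a < r) : P r * h' r ≤ 0 := by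
  by_contra! hFr
  have hsub : Ici r ⊆ Ioi a := Ici_subset_Ioi.2 hr
  have hsub' : Ici r ⊆ Ici a := hsub.trans Ioi_subset_Ici_self
  have hPinv : ContinuousOn (fun t => (P t)⁻¹) (Ici a) := hP.inv₀ fun t ht => (hPpos t ht).ne'
  refine hPint (integrableOn_Ici_of_continuousOn_of_integrableOn_Ici hr.le hPinv ?_)
  have : IntegrableOn (fun t => P r * h' r * (P t)⁻¹) (Ici r) := by
    refine integrableOn_Ici_of_le_deriv_of_bddAbove (fun t ht => hh t (hsub ht))
      (fun t ht => hC t (hsub' ht)) (continuousOn_const.mul (hPinv.mono hsub'))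
      (fun t ht => ?_) (fun t ht => ?_)
    · exact mul_nonneg hFr.le (inv_nonneg.2 (hPpos t (hsub' ht)).le)
    · have hPt := hPpos t (hsub' ht)
      calc P r * h' r * (P t)⁻¹ ≤ P t * h' t * (P t)⁻¹ :=
            mul_le_mul_of_nonneg_right (hmono hr (hsub ht) ht) (inv_nonneg.2 hPt.le)
        _ = h' t := by field_simp
  exact (integrable_const_mul_iff (isUnit_iff_ne_zero.2 hFr.ne') _).1 this

lemma tendsto_zero_of_antitoneOn {h : ℝ → ℝ} {a : ℝ} (hanti : AntitoneOn h (Ici a))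
    (h0 : ∀ t ∈ Ici a, 0 ≤ h t) (hsmall : ∀ ε > 0, ∃ x ∈ Ici a, h x < ε) :
    Tendsto h atTop (𝓝 0) := by
  refine tendsto_order.2 ⟨fun b hb => ?_, fun b hb => ?_⟩
  · filter_upwards [eventually_ge_atTop a] with x hx
    exact hb.trans_le (h0 x hx)
  · obtain ⟨x₀, hx₀, hbx₀⟩ := hsmall b hb
    filter_upwards [eventually_ge_atTop x₀] with x hx
    exact (hanti hx₀ (hx₀.trans hx) hx).trans_lt hbx₀

lemma tendsto_zero_of_hasDerivAt_mul_nonpos {F P h : ℝ → ℝ} {a c : ℝ} (hc : 0 < c)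
    (hP : ContinuousOn P (Ici a)) (hP0 : ∀ t ∈ Ici a, 0 ≤ P t)
    (hPint : ¬ IntegrableOn P (Ici a)) (hF : ∀ t ∈ Ioi a, HasDerivAt F (c * (P t * h t)) t)
    (hF0 : ∀ t ∈ Ioi a, F t ≤ 0) (hanti : AntitoneOn h (Ici a)) (hh0 : ∀ t ∈ Ici a, 0 ≤ h t) :
    Tendsto h atTop (𝓝 0) := by
  refine tendsto_zero_of_antitoneOn hanti hh0 fun ε hε => ?_
  by_contra! hge
  have hsub : Ici (a + 1) ⊆ Ioi a := Ici_subset_Ioi.2 (lt_add_one a)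
  have hsub' : Ici (a + 1) ⊆ Ici a := hsub.trans Ioi_subset_Ici_self
  have : IntegrableOn (fun t => c * ε * P t) (Ici (a + 1)) := by
    refine integrableOn_Ici_of_le_deriv_of_bddAbove (fun t ht => hF t (hsub ht))
      (fun t ht => hF0 t (hsub ht)) (continuousOn_const.mul (hP.mono hsub'))
      (fun t ht => mul_nonneg (by positivity) (hP0 t (hsub' ht))) (fun t ht => ?_)
    calc c * ε * P t = c * (P t * ε) := by ring
      _ ≤ c * (P t * h t) :=
        mul_le_mul_of_nonneg_left (mul_le_mul_of_nonneg_left (hge t (hsub' ht)) (hP0 t (hsub' ht)))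
          hc.le
  refine hPint (integrableOn_Ici_of_continuousOn_of_integrableOn_Ici (lt_add_one a).le hP ?_)
  exact (integrable_const_mul_iff (isUnit_iff_ne_zero.2 (by positivity)) _).1 this

theorem stmt_5_general (m : ℕ) (hm : 2 ≤ m) (R₀ lam : ℝ) (hlam : 0 < lam)
    (g h : ℝ → ℝ)
    (hg : ContDiffOn ℝ 1 g (Set.Ici R₀))
    (hgpos : ∀ r ∈ Set.Ici R₀, 0 < g r)
    (hgint : ¬ MeasureTheory.IntegrableOn (fun t => (g t ^ (m - 1))⁻¹) (Set.Ici R₀))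
    (hgint' : ¬ MeasureTheory.IntegrableOn (fun t => g t ^ (m - 1)) (Set.Ici R₀))
    (hbdd : ∃ C : ℝ, ∀ r ∈ Set.Ici R₀, h r ≤ C)
    (hh : ContDiffOn ℝ 2 h (Set.Ici R₀))
    (hhpos : ∀ r ∈ Set.Ici R₀, 0 < h r)
    (hode : ∀ r ∈ Set.Ici R₀,
      deriv (deriv h) r + ((m : ℝ) - 1) * (deriv g r / g r) * deriv h r = lam * h r) :
    Filter.Tendsto h Filter.atTop (nhds 0) := by
  obtain ⟨C, hC⟩ := hbdd
  set P : ℝ → ℝ := fun t => g t ^ (m - 1)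
  have hP : ContinuousOn P (Ici R₀) := hg.continuousOn.pow _
  have hPpos : ∀ t ∈ Ici R₀, 0 < P t := fun t ht => pow_pos (hgpos t ht) _
  have hdh : ∀ t ∈ Ioi R₀, HasDerivAt h (deriv h t) t := fun t ht =>
    hh.hasDerivAt_deriv two_ne_zero (Ici_mem_nhds ht)
  have hcast : (m : ℝ) - 1 = ((m - 1 : ℕ) : ℝ) := by rw [Nat.cast_sub (by omega), Nat.cast_one]
  have hflux : ∀ t ∈ Ioi R₀, HasDerivAt (fun s => P s * deriv h s) (lam * (P t * h t)) t :=
    fun t ht => hasDerivAt_pow_mul_deriv_of_ode hg hgpos hh (hcast ▸ hode) ht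
  have hmono : MonotoneOn (fun s => P s * deriv h s) (Ioi R₀) := by
    refine monotoneOn_of_hasDerivWithinAt_nonneg (convex_Ioi R₀)
      (f' := fun t => lam * (P t * h t))
      (fun t ht => (hflux t ht).continuousAt.continuousWithinAt) ?_ ?_ <;> rw [interior_Ioi]
    · exact fun t ht => (hflux t ht).hasDerivWithinAt
    · exact fun t (ht : R₀ < t) => (mul_pos hlam (mul_pos (hPpos t ht.le) (hhpos t ht.le))).le
  have hflux_nonpos : ∀ t ∈ Ioi R₀, P t * deriv h t ≤ 0 := fun t ht =>
    mul_deriv_nonpos_of_monotoneOn hP hPpos hgint hdh hC hmono ht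
  have hanti : AntitoneOn h (Ici R₀) := by
    refine antitoneOn_of_hasDerivWithinAt_nonpos (convex_Ici R₀) hh.continuousOn (f' := deriv h)
      ?_ ?_ <;> rw [interior_Ici]
    · exact fun t ht => (hdh t ht).hasDerivWithinAt
    · exact fun t (ht : R₀ < t) => nonpos_of_mul_nonpos_right (hflux_nonpos t ht) (hPpos t ht.le)
  exact tendsto_zero_of_hasDerivAt_mul_nonpos hlam hP (fun t ht => (hPpos t ht).le) hgint' hflux
    hflux_nonpos hanti (fun t ht => (hhpos t ht).le)

/-- if neither `1/g^{m-1}` nor `g^{m-1}` is integrable at infinity,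
then every bounded positive solution of `h'' + (m-1)(g'/g)h' = λ h` on `[R₀,∞)`
tends to `0` at infinity. -/
theorem stmt_5 (m : ℕ) (hm : 2 ≤ m) (R₀ lam : ℝ) (hR₀ : 0 < R₀) (hlam : 0 < lam)
    (g h : ℝ → ℝ)
    (hg : ContDiffOn ℝ 1 g (Set.Ici R₀))
    (hgpos : ∀ r ∈ Set.Ici R₀, 0 < g r)
    (hgint : ¬ MeasureTheory.IntegrableOn (fun t => (g t ^ (m - 1))⁻¹) (Set.Ici R₀))
    (hgint' : ¬ MeasureTheory.IntegrableOn (fun t => g t ^ (m - 1)) (Set.Ici R₀))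
    (hbdd : ∃ C : ℝ, ∀ r ∈ Set.Ici R₀, h r ≤ C)
    (hh : ContDiffOn ℝ 2 h (Set.Ici R₀))
    (hhpos : ∀ r ∈ Set.Ici R₀, 0 < h r)
    (hode : ∀ r ∈ Set.Ici R₀,
      deriv (deriv h) r + ((m : ℝ) - 1) * (deriv g r / g r) * deriv h r = lam * h r) :
    Filter.Tendsto h Filter.atTop (nhds 0) :=
  stmt_5_general m hm R₀ lam hlam g h hg hgpos hgint hgint' hbdd hh hhpos hode
end

section
/- Let m ≥ 2 be an integer, R₀ > 0 and λ > 0 real numbers, and g : [R₀, ∞) → ℝ a continuously differentiable function with g(r) > 0 for all r ≥ R₀. Assume that ∫_{R₀}^∞ g(t)^{1-m} dt = +∞ and that g^{m-1} is Lebesgue integrable on [R₀, ∞). Let h : [R₀, ∞) → ℝ be a bounded, twice continuously differentiable function with h(r) > 0 for all r ≥ R₀, h''(r) + (m-1)·(g'(r)/g(r))·h'(r) = λ·h(r) for all r ≥ R₀, and h(r) → 0 as r → +∞. Then ∫_{R₀}^∞ (∫_r^∞ g(t)^{m-1} dt) / g(r)^{m-1} dr = +∞. -/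
/-!
With `w = g ^ (m - 1)` the equation reads `(w h')' = λ w h`. Since `h` is bounded near infinity
and `w` is integrable, the flux `w h'` converges at infinity. Its limit is `0`: otherwise `h'`
would have a fixed sign and be comparable to `1 / w` near infinity, and as `h` converges, `h'`
and hence `1 / w` would be integrable there. So `w h' = -λ ∫_r^∞ w h ≤ 0`, `h` decreases, and
`-h' r ≤ λ h(t₀) Φ(r)` for `r ≥ t₀`, where `Φ(r) = (∫_r^∞ w) / w(r)`. Integrating over
`(t₀, ∞)` gives `h(t₀) ≤ λ h(t₀) ∫_{t₀}^∞ Φ`, which fails for large `t₀` if `Φ` is integrable.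
-/

open Set MeasureTheory Filter Topology

theorem HasDerivAt.pow_mul {g u : ℝ → ℝ} {g' u' r : ℝ} (n : ℕ) (hg : HasDerivAt g g' r)
    (hu : HasDerivAt u u' r) (hg0 : g r ≠ 0) :
    HasDerivAt (fun x => g x ^ n * u x) (g r ^ n * (u' + n * (g' / g r) * u r)) r := by
  refine ((hg.fun_pow n).mul hu).congr_deriv ?_
  rcases n with _ | n
  · simp
  · rw [Nat.add_sub_cancel, pow_succ]
    field_simp
    push_cast
    ring

theorem ContinuousOn.integrableOn_Ici_of_integrableOn_Ioi {E : Type*} [NormedAddCommGroup E]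
    {f : ℝ → E} {a b : ℝ} (hf : ContinuousOn f (Icc a b)) (hb : IntegrableOn f (Ioi b)) :
    IntegrableOn f (Ici a) :=
  (hf.integrableOn_Icc.union hb).mono_set fun x hx => by
    rcases le_or_gt x b with hxb | hbx
    exacts [Or.inl ⟨hx, hxb⟩, Or.inr hbx]

theorem eq_neg_integral_Ioi_of_hasDerivAt_of_tendsto_zero {f f' : ℝ → ℝ} {a x : ℝ}
    (hderiv : ∀ y ∈ Ioi a, HasDerivAt f (f' y) y) (hf' : IntegrableOn f' (Ioi a))
    (hf : Tendsto f atTop (𝓝 0)) (hx : x ∈ Ioi a) : f x = -∫ y in Ioi x, f' y := by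
  have hxa : Ioi x ⊆ Ioi a := Ioi_subset_Ioi hx.out.le
  rw [integral_Ioi_of_hasDerivAt_of_tendsto (hderiv x hx).continuousAt.continuousWithinAt
    (fun y hy => hderiv y (hxa hy)) (hf'.mono_set hxa) hf]
  ring

theorem le_integral_Ioi_of_neg_deriv_le {f f' g : ℝ → ℝ} {a : ℝ}
    (hf : ContinuousWithinAt f (Ici a) a) (hderiv : ∀ x ∈ Ioi a, HasDerivAt f (f' x) x)
    (hf'_nonpos : ∀ x ∈ Ioi a, f' x ≤ 0) (hlim : Tendsto f atTop (𝓝 0))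
    (hg : IntegrableOn g (Ioi a)) (hle : ∀ x ∈ Ioi a, -f' x ≤ g x) :
    f a ≤ ∫ x in Ioi a, g x :=
  calc f a = ∫ x in Ioi a, -f' x := by
        rw [integral_neg, integral_Ioi_of_hasDerivAt_of_nonpos hf hderiv hf'_nonpos hlim]; ring
    _ ≤ ∫ x in Ioi a, g x :=
        setIntegral_mono_on (integrableOn_Ioi_deriv_of_nonpos hf hderiv hf'_nonpos hlim).neg hg
          measurableSet_Ioi hle

section Flux

variable {w h h' : ℝ → ℝ} {a lam : ℝ}

theorem integrableOn_Ioi_inv_of_le_mul_deriv {l c : ℝ} (hw : ContinuousOn w (Ioi a))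
    (hw_pos : ∀ x ∈ Ioi a, 0 < w x) (hh : ContinuousWithinAt h (Ici a) a)
    (hderiv : ∀ x ∈ Ioi a, HasDerivAt h (h' x) x) (hlim : Tendsto h atTop (𝓝 l)) (hc : 0 < c)
    (hle : ∀ x ∈ Ioi a, c ≤ w x * h' x) : IntegrableOn (fun x => (w x)⁻¹) (Ioi a) := by
  have hinv_le : ∀ x ∈ Ioi a, (w x)⁻¹ ≤ c⁻¹ * h' x := fun x hx => by
    rw [inv_mul_eq_div, le_div_iff₀ hc, ← div_eq_inv_mul, div_le_iff₀ (hw_pos x hx), mul_comm]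
    exact hle x hx
  have hh'_int : IntegrableOn h' (Ioi a) :=
    integrableOn_Ioi_deriv_of_nonneg hh hderiv (fun x hx => by
      nlinarith [hinv_le x hx, inv_pos.2 (hw_pos x hx), inv_pos.2 hc]) hlim
  refine (hh'_int.const_mul c⁻¹).mono'
    ((hw.inv₀ fun x hx => (hw_pos x hx).ne').aestronglyMeasurable measurableSet_Ioi) ?_
  filter_upwards [ae_restrict_mem measurableSet_Ioi] with x hx
  rw [Real.norm_of_nonneg (inv_pos.2 (hw_pos x hx)).le]
  exact hinv_le x hx

theorem integrableOn_Ici_inv_of_eventually_le_mul_deriv {l c : ℝ} (hw : ContinuousOn w (Ici a))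
    (hw_pos : ∀ x ∈ Ici a, 0 < w x) (hderiv : ∀ x ∈ Ioi a, HasDerivAt h (h' x) x)
    (hlim : Tendsto h atTop (𝓝 l)) (hc : 0 < c) (hle : ∀ᶠ x in atTop, c ≤ w x * h' x) :
    IntegrableOn (fun x => (w x)⁻¹) (Ici a) := by
  obtain ⟨b, hb⟩ := eventually_atTop.1 hle
  set b' := max b (a + 1)
  have hab' : a < b' := (lt_add_one a).trans_le (le_max_right _ _)
  have htail : Ioi b' ⊆ Ioi a := Ioi_subset_Ioi hab'.le
  have hw_inv : ContinuousOn (fun x => (w x)⁻¹) (Icc a b') :=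
    (hw.mono Icc_subset_Ici_self).inv₀ fun x hx => (hw_pos x hx.1).ne'
  refine hw_inv.integrableOn_Ici_of_integrableOn_Ioi ?_
  exact integrableOn_Ioi_inv_of_le_mul_deriv (hw.mono (htail.trans Ioi_subset_Ici_self))
    (fun x hx => hw_pos x (Ioi_subset_Ici_self (htail hx)))
    (hderiv b' hab').continuousAt.continuousWithinAt (fun x hx => hderiv x (htail hx)) hlim hc
    (fun x hx => hb x ((le_max_left _ _).trans hx.out.le))

theorem eq_zero_of_tendsto_mul_deriv {l L : ℝ} (hw : ContinuousOn w (Ici a))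
    (hw_pos : ∀ x ∈ Ici a, 0 < w x) (hw_inv : ¬ IntegrableOn (fun x => (w x)⁻¹) (Ici a))
    (hderiv : ∀ x ∈ Ioi a, HasDerivAt h (h' x) x) (hlim : Tendsto h atTop (𝓝 l))
    (hF : Tendsto (fun x => w x * h' x) atTop (𝓝 L)) : L = 0 := by
  rcases lt_trichotomy L 0 with hL | hL | hL
  · refine (hw_inv (integrableOn_Ici_inv_of_eventually_le_mul_deriv (h := -h) (h' := -h') hw
      hw_pos (fun x hx => (hderiv x hx).neg) hlim.neg (c := -L / 2) (by linarith) ?_)).elim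
    filter_upwards [hF.eventually (eventually_le_nhds (show L < L / 2 by linarith))] with x hx
    simp only [Pi.neg_apply, mul_neg]
    linarith
  · exact hL
  · exact (hw_inv (integrableOn_Ici_inv_of_eventually_le_mul_deriv hw hw_pos hderiv hlim
      (c := L / 2) (by linarith) (hF.eventually (eventually_ge_nhds (by linarith))))).elim

theorem neg_deriv_le_of_mul_deriv_eq_neg_integral {x C : ℝ} (hlam : 0 ≤ lam) (hwx : 0 < w x)
    (hw_nonneg : ∀ t ∈ Ioi x, 0 ≤ w t) (hw_int : IntegrableOn w (Ioi x))
    (hwh : IntegrableOn (fun t => w t * h t) (Ioi x)) (hhC : ∀ t ∈ Ioi x, h t ≤ C)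
    (hF : w x * h' x = -(lam * ∫ t in Ioi x, w t * h t)) :
    -h' x ≤ lam * C * ((∫ t in Ici x, w t) / w x) := by
  have hT : ∫ t in Ioi x, w t * h t ≤ C * ∫ t in Ioi x, w t := by
    rw [← integral_const_mul]
    exact setIntegral_mono_on hwh (hw_int.const_mul C) measurableSet_Ioi fun t ht => by
      nlinarith [hw_nonneg t ht, hhC t ht]
  rw [integral_Ici_eq_integral_Ioi, mul_div_assoc', le_div_iff₀ hwx]
  calc -h' x * w x = lam * ∫ t in Ioi x, w t * h t := by linear_combination -hF
    _ ≤ lam * C * ∫ t in Ioi x, w t := by rw [mul_assoc]; exact mul_le_mul_of_nonneg_left hT hlam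

theorem not_integrableOn_Ioi_integral_div_of_tendsto_mul_deriv_zero (hlam : 0 < lam)
    (hw_pos : ∀ x ∈ Ioi a, 0 < w x) (hw_int : IntegrableOn w (Ioi a))
    (hh : ContinuousOn h (Ici a)) (hh_pos : ∀ x ∈ Ioi a, 0 < h x)
    (hderiv : ∀ x ∈ Ioi a, HasDerivAt h (h' x) x)
    (hflux : ∀ x ∈ Ioi a, HasDerivAt (fun y => w y * h' y) (lam * (w x * h x)) x)
    (hwh : IntegrableOn (fun x => w x * h x) (Ioi a))
    (hF : Tendsto (fun x => w x * h' x) atTop (𝓝 0)) (hlim : Tendsto h atTop (𝓝 0)) :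
    ¬ IntegrableOn (fun r => (∫ t in Ici r, w t) / w r) (Ioi a) := by
  have hF_eq : ∀ x ∈ Ioi a, w x * h' x = -(lam * ∫ t in Ioi x, w t * h t) := fun x hx => by
    rw [eq_neg_integral_Ioi_of_hasDerivAt_of_tendsto_zero hflux (hwh.const_mul lam) hF hx,
      integral_const_mul]
  have hderiv_nonpos : ∀ x ∈ Ioi a, h' x ≤ 0 := by
    intro x hx
    have hxa : Ioi x ⊆ Ioi a := Ioi_subset_Ioi (le_of_lt hx)
    have hT : 0 ≤ ∫ t in Ioi x, w t * h t := setIntegral_nonneg measurableSet_Ioi fun t ht =>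
      (mul_pos (hw_pos t (hxa ht)) (hh_pos t (hxa ht))).le
    nlinarith [hF_eq x hx, hw_pos x hx]
  have hanti : AntitoneOn h (Ici a) :=
    antitoneOn_of_hasDerivWithinAt_nonpos (convex_Ici a) hh
      (by simpa using fun x hx => (hderiv x hx).hasDerivWithinAt) (by simpa using hderiv_nonpos)
  intro hΦ
  obtain ⟨t₀, ht₀, hsmall⟩ : ∃ t₀ ∈ Ioi a,
      lam * ∫ x in Ioi t₀, (∫ t in Ici x, w t) / w x < 1 := by
    have := (tendsto_integral_Ioi_zero (f := fun x => (∫ t in Ici x, w t) / w x)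
      (μ := volume) tendsto_id).const_mul lam
    rw [mul_zero] at this
    exact ((eventually_gt_atTop a).and (this.eventually (eventually_lt_nhds one_pos))).exists
  have htail : Ioi t₀ ⊆ Ioi a := Ioi_subset_Ioi (le_of_lt ht₀)
  have hbound : ∀ x ∈ Ioi t₀, -h' x ≤ lam * h t₀ * ((∫ t in Ici x, w t) / w x) := by
    intro x hx
    have hxa : Ioi x ⊆ Ioi a := Ioi_subset_Ioi (htail hx).out.le
    refine neg_deriv_le_of_mul_deriv_eq_neg_integral hlam.le (hw_pos x (htail hx))
      (fun t ht => (hw_pos t (hxa ht)).le) (hw_int.mono_set hxa) (hwh.mono_set hxa)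
      (fun t ht => ?_) (hF_eq x (htail hx))
    exact hanti (Ioi_subset_Ici_self ht₀) (Ioi_subset_Ici_self (hxa ht)) (hx.out.trans ht).le
  have hle : h t₀ ≤ lam * h t₀ * ∫ x in Ioi t₀, (∫ t in Ici x, w t) / w x := by
    rw [← integral_const_mul]
    exact le_integral_Ioi_of_neg_deriv_le (hderiv t₀ ht₀).continuousAt.continuousWithinAt
      (fun x hx => hderiv x (htail hx)) (fun x hx => hderiv_nonpos x (htail hx)) hlim
      ((hΦ.mono_set htail).const_mul _) hbound
  nlinarith [hh_pos t₀ ht₀]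

theorem not_integrableOn_Ici_integral_div_of_eigenfunction (hlam : 0 < lam)
    (hw : ContinuousOn w (Ici a)) (hw_pos : ∀ x ∈ Ici a, 0 < w x)
    (hw_inv : ¬ IntegrableOn (fun x => (w x)⁻¹) (Ici a)) (hw_int : IntegrableOn w (Ici a))
    (hh : ContinuousOn h (Ici a)) (hh_pos : ∀ x ∈ Ici a, 0 < h x)
    (hderiv : ∀ x ∈ Ioi a, HasDerivAt h (h' x) x)
    (hflux : ∀ x ∈ Ioi a, HasDerivAt (fun y => w y * h' y) (lam * (w x * h x)) x)
    (hlim : Tendsto h atTop (𝓝 0)) :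
    ¬ IntegrableOn (fun r => (∫ t in Ici r, w t) / w r) (Ici a) := by
  obtain ⟨b, hb⟩ := eventually_atTop.1
    ((eventually_ge_atTop a).and (hlim.eventually (eventually_le_nhds one_pos)))
  have hIoi : Ioi b ⊆ Ioi a := Ioi_subset_Ioi (hb b le_rfl).1
  have hsub : Ioi b ⊆ Ici a := hIoi.trans Ioi_subset_Ici_self
  have hwh : IntegrableOn (fun x => w x * h x) (Ioi b) := by
    refine (hw_int.mono_set hsub).mul_bdd (c := 1)
      ((hh.mono hsub).aestronglyMeasurable measurableSet_Ioi) ?_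
    filter_upwards [ae_restrict_mem measurableSet_Ioi] with x hx
    rw [Real.norm_of_nonneg (hh_pos x (hsub hx)).le]
    exact (hb x hx.out.le).2
  have hF := tendsto_limUnder_of_hasDerivAt_of_integrableOn_Ioi
    (fun x hx => hflux x (hIoi hx)) (hwh.const_mul lam)
  rw [eq_zero_of_tendsto_mul_deriv hw hw_pos hw_inv hderiv hlim hF] at hF
  exact fun hΦ => not_integrableOn_Ioi_integral_div_of_tendsto_mul_deriv_zero hlam
    (fun x hx => hw_pos x (hsub hx)) (hw_int.mono_set hsub)
    (hh.mono (Ici_subset_Ici.2 (hb b le_rfl).1)) (fun x hx => hh_pos x (hsub hx))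
    (fun x hx => hderiv x (hIoi hx)) (fun x hx => hflux x (hIoi hx)) hwh hF hlim
    (hΦ.mono_set hsub)

end Flux

theorem stmt_7_general (m : ℕ) (hm : 2 ≤ m) (R₀ lam : ℝ) (hlam : 0 < lam)
    (g h : ℝ → ℝ)
    (hg : ContDiffOn ℝ 1 g (Set.Ici R₀))
    (hgpos : ∀ r ∈ Set.Ici R₀, 0 < g r)
    (hgint : ¬ MeasureTheory.IntegrableOn (fun t => (g t ^ (m - 1))⁻¹) (Set.Ici R₀))
    (hgint' : MeasureTheory.IntegrableOn (fun t => g t ^ (m - 1)) (Set.Ici R₀))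
    (hh : ContDiffOn ℝ 2 h (Set.Ici R₀))
    (hhpos : ∀ r ∈ Set.Ici R₀, 0 < h r)
    (hode : ∀ r ∈ Set.Ici R₀,
      deriv (deriv h) r + ((m : ℝ) - 1) * (deriv g r / g r) * deriv h r = lam * h r)
    (hlim : Filter.Tendsto h Filter.atTop (nhds 0)) :
    ¬ MeasureTheory.IntegrableOn
      (fun r => (∫ t in Set.Ici r, g t ^ (m - 1)) / g r ^ (m - 1)) (Set.Ici R₀) := by
  have hcast : ((m - 1 : ℕ) : ℝ) = m - 1 := by
    rw [Nat.cast_sub (by omega), Nat.cast_one]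
  have hderiv : ∀ x ∈ Ioi R₀, HasDerivAt h (deriv h x) x := fun x hx =>
    ((hh.contDiffAt (Ici_mem_nhds hx)).differentiableAt two_ne_zero).hasDerivAt
  refine not_integrableOn_Ici_integral_div_of_eigenfunction hlam (hg.continuousOn.pow _)
    (fun r hr => pow_pos (hgpos r hr) _) hgint hgint' hh.continuousOn hhpos hderiv
    (fun x hx => ?_) hlim
  have hg' : HasDerivAt g (deriv g x) x :=
    ((hg.contDiffAt (Ici_mem_nhds hx)).differentiableAt one_ne_zero).hasDerivAt
  have hh'' : HasDerivAt (deriv h) (deriv (deriv h) x) x :=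
    (((hh.mono Ioi_subset_Ici_self).deriv_of_isOpen isOpen_Ioi (m := 1) le_rfl).differentiableOn
      one_ne_zero x hx |>.differentiableAt (Ioi_mem_nhds hx)).hasDerivAt
  refine (hg'.pow_mul (m - 1) hh'' (hgpos x (Ioi_subset_Ici_self hx)).ne').congr_deriv ?_
  rw [hcast, hode x (Ioi_subset_Ici_self hx)]
  ring

/-- converse direction: if `1/g^{m-1}` is not integrable, `g^{m-1}`
is integrable, and some bounded positive solution of `h'' + (m-1)(g'/g)h' = λ h`
tends to `0` at infinity, then `r ↦ (∫_r^∞ g^{m-1})/g(r)^{m-1}` is not integrable. -/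
theorem stmt_7 (m : ℕ) (hm : 2 ≤ m) (R₀ lam : ℝ) (hR₀ : 0 < R₀) (hlam : 0 < lam)
    (g h : ℝ → ℝ)
    (hg : ContDiffOn ℝ 1 g (Set.Ici R₀))
    (hgpos : ∀ r ∈ Set.Ici R₀, 0 < g r)
    (hgint : ¬ MeasureTheory.IntegrableOn (fun t => (g t ^ (m - 1))⁻¹) (Set.Ici R₀))
    (hgint' : MeasureTheory.IntegrableOn (fun t => g t ^ (m - 1)) (Set.Ici R₀))
    (hbdd : ∃ C : ℝ, ∀ r ∈ Set.Ici R₀, h r ≤ C)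
    (hh : ContDiffOn ℝ 2 h (Set.Ici R₀))
    (hhpos : ∀ r ∈ Set.Ici R₀, 0 < h r)
    (hode : ∀ r ∈ Set.Ici R₀,
      deriv (deriv h) r + ((m : ℝ) - 1) * (deriv g r / g r) * deriv h r = lam * h r)
    (hlim : Filter.Tendsto h Filter.atTop (nhds 0)) :
    ¬ MeasureTheory.IntegrableOn
      (fun r => (∫ t in Set.Ici r, g t ^ (m - 1)) / g r ^ (m - 1)) (Set.Ici R₀) :=
  stmt_7_general m hm R₀ lam hlam g h hg hgpos hgint hgint' hh hhpos hode hlim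
end

section
/- Let λ > 0 and a < b₁ ≤ b₂ be real numbers, and let c : [a, b₂] → ℝ be continuous. Suppose h₁ : [a, b₁] → ℝ and h₂ : [a, b₂] → ℝ are twice continuously differentiable and satisfy h_i''(r) + c(r)·h_i'(r) = λ·h_i(r) on their domains, with h₁(a) = h₂(a) = 1, h₁(b₁) = 0, and h₂(b₂) = 0. Then h₁(r) ≤ h₂(r) for all r ∈ [a, b₁]. -/
/-!
The difference `h₂ - h₁` solves the same equation on `[a, b₁]`, equals `0` at `a` and
`h₂ b₁` at `b₁`. So both claims `h₂ ≥ 0` on `[a, b₂]` and `h₂ - h₁ ≥ 0` on `[a, b₁]` follow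
from the minimum principle for `f'' + c f' = λ f` with `λ > 0`: at an interior negative minimum
`f' = 0` and `f'' ≥ 0`, whereas the equation forces `f'' = λ f < 0`.
-/

open Set Filter Topology

/-- A local minimum with `f'' < 0` would also be a local maximum by the second derivative test,
so `f` would be locally constant and `f''` would vanish. -/
theorem IsLocalMin.deriv_deriv_nonneg {f : ℝ → ℝ} {x : ℝ} (hmin : IsLocalMin f x)
    (hf : ContinuousAt f x) : 0 ≤ deriv (deriv f) x := by
  by_contra! hneg
  have hmax : IsLocalMax f x := isLocalMax_of_deriv_deriv_neg hneg hmin.deriv_eq_zero hf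
  have hconst : f =ᶠ[𝓝 x] fun _ => f x :=
    (hmin.and hmax).mono fun y hy => le_antisymm hy.2 hy.1
  have hzero : deriv (deriv f) x = 0 := by
    rw [hconst.deriv.deriv_eq]
    simp
  exact hneg.ne hzero

theorem nonneg_of_deriv_deriv_add_mul_deriv_eq {lam x y : ℝ} {c f : ℝ → ℝ} (hlam : 0 < lam)
    (hf : ContinuousOn f (Icc x y))
    (hode : ∀ r ∈ Ioo x y, deriv (deriv f) r + c r * deriv f r = lam * f r)
    (hx : 0 ≤ f x) (hy : 0 ≤ f y) : ∀ r ∈ Icc x y, 0 ≤ f r := by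
  intro r hr
  obtain ⟨r₀, hr₀, hmin⟩ := isCompact_Icc.exists_isMinOn (nonempty_of_mem hr) hf
  suffices 0 ≤ f r₀ from this.trans (hmin hr)
  by_contra! hneg
  have hr₀' : r₀ ∈ Ioo x y := by
    refine ⟨hr₀.1.lt_of_ne ?_, hr₀.2.lt_of_ne ?_⟩ <;> rintro rfl <;> linarith
  have hnhds : Icc x y ∈ 𝓝 r₀ := Icc_mem_nhds hr₀'.1 hr₀'.2
  have hloc : IsLocalMin f r₀ := hmin.isLocalMin hnhds
  have hf'' : 0 ≤ deriv (deriv f) r₀ := hloc.deriv_deriv_nonneg (hf.continuousAt hnhds)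
  have := hode r₀ hr₀'
  rw [hloc.deriv_eq_zero, mul_zero, add_zero] at this
  nlinarith

theorem deriv_deriv_add_mul_deriv_sub {lam x : ℝ} {c f g : ℝ → ℝ}
    (hf : ContDiffAt ℝ 2 f x) (hg : ContDiffAt ℝ 2 g x)
    (hfx : deriv (deriv f) x + c x * deriv f x = lam * f x)
    (hgx : deriv (deriv g) x + c x * deriv g x = lam * g x) :
    deriv (deriv (f - g)) x + c x * deriv (f - g) x = lam * (f - g) x := by
  have h2 : deriv (deriv (f - g)) x = deriv (deriv f) x - deriv (deriv g) x := by
    simpa only [iteratedDeriv_succ, iteratedDeriv_zero] using iteratedDeriv_sub hf hg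
  rw [h2, deriv_sub (hf.differentiableAt two_ne_zero) (hg.differentiableAt two_ne_zero),
    Pi.sub_apply]
  linear_combination hfx - hgx

theorem stmt_11_general (lam a b₁ b₂ : ℝ) (hlam : 0 < lam) (hbb : b₁ ≤ b₂)
    (c h₁ h₂ : ℝ → ℝ)
    (hh₁ : ContDiffOn ℝ 2 h₁ (Set.Icc a b₁))
    (hh₂ : ContDiffOn ℝ 2 h₂ (Set.Icc a b₂))
    (hode₁ : ∀ r ∈ Set.Icc a b₁,
      deriv (deriv h₁) r + c r * deriv h₁ r = lam * h₁ r)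
    (hode₂ : ∀ r ∈ Set.Icc a b₂,
      deriv (deriv h₂) r + c r * deriv h₂ r = lam * h₂ r)
    (hva₁ : h₁ a = 1) (hva₂ : h₂ a = 1)
    (hvb₁ : h₁ b₁ = 0) (hvb₂ : h₂ b₂ = 0) :
    ∀ r ∈ Set.Icc a b₁, h₁ r ≤ h₂ r := by
  intro r hr
  have hsub : Icc a b₁ ⊆ Icc a b₂ := Icc_subset_Icc_right hbb
  have h₂_nonneg : ∀ s ∈ Icc a b₂, 0 ≤ h₂ s :=
    nonneg_of_deriv_deriv_add_mul_deriv_eq hlam hh₂.continuousOn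
      (fun s hs => hode₂ s (Ioo_subset_Icc_self hs)) (by simp [hva₂]) hvb₂.ge
  have hdiff_ode : ∀ s ∈ Ioo a b₁,
      deriv (deriv (h₂ - h₁)) s + c s * deriv (h₂ - h₁) s = lam * (h₂ - h₁) s := fun s hs =>
    deriv_deriv_add_mul_deriv_sub
      (hh₂.contDiffAt (Icc_mem_nhds hs.1 (hs.2.trans_le hbb)))
      (hh₁.contDiffAt (Icc_mem_nhds hs.1 hs.2))
      (hode₂ s (hsub (Ioo_subset_Icc_self hs))) (hode₁ s (Ioo_subset_Icc_self hs))
  have hdiff_nonneg : ∀ s ∈ Icc a b₁, 0 ≤ (h₂ - h₁) s :=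
    nonneg_of_deriv_deriv_add_mul_deriv_eq hlam
      ((hh₂.continuousOn.mono hsub).sub hh₁.continuousOn) hdiff_ode
      (by simp [hva₁, hva₂]) (by simpa [hvb₁] using h₂_nonneg b₁ ⟨hr.1.trans hr.2, hbb⟩)
  simpa using hdiff_nonneg r hr

/-- monotonicity in the domain of Dirichlet solutions of
`h'' + c h' = λ h` with boundary values `1` at `a` and `0` at the outer endpoint:
if `b₁ ≤ b₂` then `h₁ ≤ h₂` on `[a, b₁]`. -/
theorem stmt_11 (lam a b₁ b₂ : ℝ) (hlam : 0 < lam) (hab : a < b₁) (hbb : b₁ ≤ b₂)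
    (c h₁ h₂ : ℝ → ℝ)
    (hc : ContinuousOn c (Set.Icc a b₂))
    (hh₁ : ContDiffOn ℝ 2 h₁ (Set.Icc a b₁))
    (hh₂ : ContDiffOn ℝ 2 h₂ (Set.Icc a b₂))
    (hode₁ : ∀ r ∈ Set.Icc a b₁,
      deriv (deriv h₁) r + c r * deriv h₁ r = lam * h₁ r)
    (hode₂ : ∀ r ∈ Set.Icc a b₂,
      deriv (deriv h₂) r + c r * deriv h₂ r = lam * h₂ r)
    (hva₁ : h₁ a = 1) (hva₂ : h₂ a = 1)
    (hvb₁ : h₁ b₁ = 0) (hvb₂ : h₂ b₂ = 0) :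
    ∀ r ∈ Set.Icc a b₁, h₁ r ≤ h₂ r :=
  stmt_11_general lam a b₁ b₂ hlam hbb c h₁ h₂ hh₁ hh₂ hode₁ hode₂ hva₁ hva₂ hvb₁ hvb₂
end

section
/- Let α > 0, β > 2, and λ > 0 be real numbers, and define g : [10, ∞) → ℝ by g(r) = exp(−α·r^β). Suppose h : [10, ∞) → ℝ is a bounded, twice continuously differentiable function with h(r) > 0 for all r ≥ 10, h(10) = 1, and h''(r) + (g'(r)/g(r))·h'(r) = λ·h(r) for all r ≥ 10. Then h is strictly decreasing and converges, as r → +∞, to a strictly positive limit; in particular h(r) does not tend to 0. -/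
/-!
With `g = exp (-α r ^ β)` the equation reads `(g h')' = λ g h`, so `B = g h'` is strictly
increasing. As `g ≤ 1`, a point with `h' ≥ 0` would make `h' ≥ B(r₁) > 0` further on,
against boundedness; hence `h' < 0`, and then positivity of `h` forces `sup B = 0`.
The tangent bound `g t ≤ g r · exp (-αβ r^(β-1) (t - r))` and monotonicity of `h` give
`-B r ≤ λ h(r) g(r) / (αβ r^(β-1))`, i.e. `(log h)' ≥ -(λ/αβ) r^(1-β)`. Since `β > 2` this
is integrable at infinity, so `h` is bounded below by a positive constant.
-/

open Set Filter Real Topology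

lemma ContDiffOn.differentiableOn_deriv_interior {f : ℝ → ℝ} {s : Set ℝ}
    (hf : ContDiffOn ℝ 2 f s) : DifferentiableOn ℝ (deriv f) (interior s) :=
  ((hf.mono interior_subset).deriv_of_isOpen isOpen_interior (m := 1)
    (by norm_num)).differentiableOn one_ne_zero

lemma not_bddAbove_image_of_le_deriv {f : ℝ → ℝ} {a δ : ℝ} (hδ : 0 < δ)
    (hf : ContinuousOn f (Ici a)) (hf' : DifferentiableOn ℝ f (Ioi a))
    (hle : ∀ x ∈ Ioi a, δ ≤ deriv f x) : ¬BddAbove (f '' Ici a) := by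
  rintro ⟨M, hM⟩
  have hfa : f a ≤ M := hM (mem_image_of_mem f self_mem_Ici)
  set y := a + (M - f a + 1) / δ
  have hay : a ≤ y := le_add_of_nonneg_right (div_nonneg (by linarith) hδ.le)
  have hgrowth := (convex_Ici a).mul_sub_le_image_sub_of_le_deriv hf
    (by rwa [interior_Ici]) (by rwa [interior_Ici]) a self_mem_Ici y hay hay
  have hstep : δ * (y - a) = M - f a + 1 := by simp only [y]; field_simp; ring
  linarith [hM (mem_image_of_mem f hay)]

lemma sub_le_of_deriv_le_mul_exp {f f' : ℝ → ℝ} {r s K c : ℝ} (hrs : r ≤ s) (hK : 0 ≤ K)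
    (hf : ∀ t ∈ Icc r s, HasDerivAt f (f' t) t)
    (hle : ∀ t ∈ Icc r s, f' t ≤ K * c * exp (-(c * (t - r)))) : f s - f r ≤ K := by
  have hG : ∀ t ∈ Icc r s, HasDerivAt (fun t => f t + K * exp (-(c * (t - r))))
      (f' t - K * c * exp (-(c * (t - r)))) t := fun t ht => by
    have hlin : HasDerivAt (fun t => -(c * (t - r))) (-c) t := by
      simpa using (((hasDerivAt_id' t).sub_const r).const_mul c).fun_neg
    exact ((hf t ht).fun_add (hlin.exp.const_mul K)).congr_deriv (by ring)
  have hanti : AntitoneOn (fun t => f t + K * exp (-(c * (t - r)))) (Icc r s) := by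
    refine antitoneOn_of_hasDerivWithinAt_nonpos
      (f' := fun t => f' t - K * c * exp (-(c * (t - r)))) (convex_Icc r s)
      (fun t ht => (hG t ht).continuousAt.continuousWithinAt) (fun t ht => ?_) (fun t ht => ?_)
    · exact (hG t (interior_subset ht)).hasDerivWithinAt
    · linarith [hle t (interior_subset ht)]
  have hGrs := hanti (left_mem_Icc.2 hrs) (right_mem_Icc.2 hrs) hrs
  simp only [sub_self, mul_zero, neg_zero, exp_zero, mul_one] at hGrs
  nlinarith [exp_pos (-(c * (s - r)))]

lemma monotoneOn_mul_exp_neg {D : Set ℝ} (hD : Convex ℝ D) {h h' ψ ψ' : ℝ → ℝ}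
    (hh : ContinuousOn h D) (hψ : ContinuousOn ψ D)
    (hh' : ∀ x ∈ interior D, HasDerivAt h (h' x) x)
    (hψ' : ∀ x ∈ interior D, HasDerivAt ψ (ψ' x) x)
    (hle : ∀ x ∈ interior D, ψ' x * h x ≤ h' x) :
    MonotoneOn (fun x => h x * exp (-ψ x)) D := by
  refine monotoneOn_of_hasDerivWithinAt_nonneg
    (f' := fun x => exp (-ψ x) * (h' x - ψ' x * h x)) hD (hh.mul hψ.neg.rexp)
    (fun x hx => ?_) fun x hx => mul_nonneg (exp_pos _).le (sub_nonneg.2 (hle x hx))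
  exact (((hh' x hx).fun_mul (hψ' x hx).fun_neg.exp).congr_deriv (by ring)).hasDerivWithinAt

lemma AntitoneOn.exists_tendsto_atTop_of_le {f : ℝ → ℝ} {a m : ℝ} (hf : AntitoneOn f (Ici a))
    (hm : ∀ x ∈ Ici a, m ≤ f x) : ∃ L, m ≤ L ∧ Tendsto f atTop (𝓝 L) := by
  have hmax : ∀ x, max x a ∈ Ici a := fun x => le_max_right x a
  have hanti : Antitone fun x => f (max x a) := fun x y hxy =>
    hf (hmax x) (hmax y) (max_le_max hxy le_rfl)
  refine ⟨⨅ x, f (max x a), le_ciInf fun x => hm _ (hmax x), ?_⟩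
  refine (tendsto_atTop_ciInf hanti ⟨m, ?_⟩).congr' ?_
  · rintro _ ⟨x, rfl⟩
    exact hm _ (hmax x)
  · filter_upwards [eventually_ge_atTop a] with x hx
    rw [max_eq_left hx]

lemma rpow_add_mul_sub_le_rpow {β r t : ℝ} (hβ : 1 ≤ β) (hr : 0 < r) (hrt : r ≤ t) :
    r ^ β + β * r ^ (β - 1) * (t - r) ≤ t ^ β := by
  have hbern := one_add_mul_self_le_rpow_one_add (s := (t - r) / r)
    (by linarith [div_nonneg (sub_nonneg.2 hrt) hr.le]) hβ
  have ht : 1 + (t - r) / r = t / r := by field_simp; ring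
  rw [ht, div_rpow (hr.le.trans hrt) hr.le, le_div_iff₀ (rpow_pos_of_pos hr β)] at hbern
  calc r ^ β + β * r ^ (β - 1) * (t - r) = (1 + β * ((t - r) / r)) * r ^ β := by
        rw [rpow_sub_one hr.ne']; field_simp
    _ ≤ t ^ β := hbern

lemma exp_neg_mul_rpow_le {α β r t : ℝ} (hα : 0 ≤ α) (hβ : 1 ≤ β) (hr : 0 < r) (hrt : r ≤ t) :
    exp (-(α * t ^ β)) ≤ exp (-(α * r ^ β)) * exp (-(α * β * r ^ (β - 1) * (t - r))) := by
  rw [← exp_add, exp_le_exp]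
  nlinarith [mul_le_mul_of_nonneg_left (rpow_add_mul_sub_le_rpow hβ hr hrt) hα]

lemma exp_neg_mul_rpow_le_one {α β x : ℝ} (hα : 0 ≤ α) (hx : 0 ≤ x) :
    exp (-(α * x ^ β)) ≤ 1 :=
  exp_le_one_iff.2 (neg_nonpos.2 (mul_nonneg hα (rpow_nonneg hx β)))

lemma differentiableAt_exp_neg_mul_rpow {α β x : ℝ} (hx : x ≠ 0) :
    DifferentiableAt ℝ (fun r => exp (-(α * r ^ β))) x :=
  ((differentiableAt_id.rpow_const (Or.inl hx)).const_mul α).neg.exp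

lemma hasDerivAt_mul_deriv_of_ode {g h : ℝ → ℝ} {lam x : ℝ} (hg : DifferentiableAt ℝ g x)
    (hgx : g x ≠ 0) (hh : DifferentiableAt ℝ (deriv h) x)
    (hode : deriv (deriv h) x + deriv g x / g x * deriv h x = lam * h x) :
    HasDerivAt (fun t => g t * deriv h t) (lam * (g x * h x)) x := by
  refine (hg.hasDerivAt.fun_mul hh.hasDerivAt).congr_deriv ?_
  rw [mul_left_comm, ← hode]
  field_simp
  ring

lemma strictMonoOn_mul_deriv {w h : ℝ → ℝ} {a lam : ℝ} (hlam : 0 < lam)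
    (hw_pos : ∀ x ∈ Ioi a, 0 < w x) (hh_pos : ∀ x ∈ Ioi a, 0 < h x)
    (hB : ∀ x ∈ Ioi a, HasDerivAt (fun x => w x * deriv h x) (lam * (w x * h x)) x) :
    StrictMonoOn (fun x => w x * deriv h x) (Ioi a) :=
  strictMonoOn_of_hasDerivWithinAt_pos (convex_Ioi a)
    (fun x hx => (hB x hx).continuousAt.continuousWithinAt)
    (fun x hx => (hB x (interior_Ioi.subset hx)).hasDerivWithinAt) fun x hx => by
      rw [interior_Ioi] at hx
      have := hw_pos x hx
      have := hh_pos x hx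
      positivity

lemma deriv_neg_of_strictMonoOn_mul_deriv {w h : ℝ → ℝ} {a x : ℝ}
    (hw_pos : ∀ x ∈ Ioi a, 0 < w x) (hw_le : ∀ x ∈ Ioi a, w x ≤ 1)
    (hh : ContinuousOn h (Ici a)) (hh' : DifferentiableOn ℝ h (Ioi a))
    (hbdd : BddAbove (h '' Ici a))
    (hB : StrictMonoOn (fun x => w x * deriv h x) (Ioi a)) (hx : a < x) :
    deriv h x < 0 := by
  by_contra! hx0
  have hx1 : a < x + 1 := by linarith
  have hB1 : 0 < w (x + 1) * deriv h (x + 1) :=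
    (mul_nonneg (hw_pos x hx).le hx0).trans_lt (hB hx hx1 (by linarith))
  refine not_bddAbove_image_of_le_deriv hB1 (hh.mono (Ici_subset_Ici.2 hx1.le))
    (hh'.mono (Ioi_subset_Ioi hx1.le)) (fun y hy => ?_)
    (hbdd.mono (image_mono (Ici_subset_Ici.2 hx1.le)))
  have hya : a < y := hx1.trans hy
  have hBy : w (x + 1) * deriv h (x + 1) ≤ w y * deriv h y := hB.monotoneOn hx1 hya hy.out.le
  have hy0 : 0 < deriv h y := pos_of_mul_pos_right (hB1.trans_le hBy) (hw_pos y hya).le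
  nlinarith [hw_le y hya]

lemma exists_neg_le_mul_deriv {w h : ℝ → ℝ} {a ε : ℝ} (hε : 0 < ε)
    (hw_le : ∀ x ∈ Ioi a, w x ≤ 1)
    (hh : ContinuousOn h (Ici a)) (hh' : DifferentiableOn ℝ h (Ioi a))
    (hh_nonneg : ∀ x ∈ Ici a, 0 ≤ h x) (hderiv : ∀ x ∈ Ioi a, deriv h x ≤ 0) :
    ∃ x ∈ Ioi a, -ε ≤ w x * deriv h x := by
  by_contra! hlt
  refine not_bddAbove_image_of_le_deriv hε hh.neg hh'.neg (fun x hx => ?_) ⟨0, ?_⟩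
  · rw [deriv.neg]
    nlinarith [hlt x hx, hw_le x hx, hderiv x hx]
  · rintro _ ⟨x, hx, rfl⟩
    simpa using hh_nonneg x hx

lemma neg_div_mul_le_deriv {w h : ℝ → ℝ} {a lam c r : ℝ} (hlam : 0 ≤ lam) (hc : 0 < c)
    (hr : a < r) (hw_pos : ∀ x ∈ Ioi a, 0 < w x) (hw_le : ∀ x ∈ Ioi a, w x ≤ 1)
    (hw_tan : ∀ t, r ≤ t → w t ≤ w r * exp (-(c * (t - r))))
    (hh : ContinuousOn h (Ici a)) (hh' : DifferentiableOn ℝ h (Ioi a))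
    (hh_pos : ∀ x ∈ Ici a, 0 < h x) (hderiv : ∀ x ∈ Ioi a, deriv h x < 0)
    (hB : ∀ x ∈ Ioi a, HasDerivAt (fun x => w x * deriv h x) (lam * (w x * h x)) x)
    (hB_mono : MonotoneOn (fun x => w x * deriv h x) (Ioi a)) :
    -(lam / c) * h r ≤ deriv h r := by
  have hanti : AntitoneOn h (Ici a) :=
    antitoneOn_of_deriv_nonpos (convex_Ici a) hh (by rwa [interior_Ici])
      (by simpa only [interior_Ici] using fun x hx => (hderiv x hx).le)
  set K := lam * w r * h r / c
  have hK : 0 ≤ K := by have := hw_pos r hr; have := hh_pos r hr.le; positivity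
  -- The derivative `λ w h` of `B` is at most `λ w r h r exp (-c (t - r))`, whose integral over
  -- `[r, ∞)` is `K`.
  have hincr : ∀ s, r ≤ s → w s * deriv h s - w r * deriv h r ≤ K := by
    intro s hrs
    refine sub_le_of_deriv_le_mul_exp (c := c) hrs hK (fun t ht => hB t (hr.trans_le ht.1))
      fun t ht => ?_
    have hta : a < t := hr.trans_le ht.1
    have hwh : w t * h t ≤ w r * exp (-(c * (t - r))) * h r :=
      mul_le_mul (hw_tan t ht.1) (hanti hr.le hta.le ht.1) (hh_pos t hta.le).le
        (by have := hw_pos r hr; positivity)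
    calc lam * (w t * h t) ≤ lam * (w r * exp (-(c * (t - r))) * h r) :=
          mul_le_mul_of_nonneg_left hwh hlam
      _ = K * c * exp (-(c * (t - r))) := by simp only [K]; field_simp
  have hBr : -K ≤ w r * deriv h r := by
    refine neg_le.1 (le_of_forall_pos_le_add fun ε hε => ?_)
    obtain ⟨s, hs, hBs⟩ := exists_neg_le_mul_deriv hε hw_le hh hh'
      (fun x hx => (hh_pos x hx).le) fun x hx => (hderiv x hx).le
    rcases le_total r s with hrs | hsr
    · linarith [hincr s hrs]
    · linarith [hB_mono hs hr hsr]
  have hwr := hw_pos r hr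
  rw [← mul_le_mul_iff_of_pos_left hwr]
  calc w r * (-(lam / c) * h r) = -K := by simp only [K]; field_simp
    _ ≤ w r * deriv h r := hBr

lemma mul_exp_le_of_neg_div_rpow_mul_le_deriv {h : ℝ → ℝ} {a β K x : ℝ} (ha : 0 < a) (hβ : 2 < β)
    (hK : 0 ≤ K) (hh : ContinuousOn h (Ici a)) (hh' : DifferentiableOn ℝ h (Ioi a))
    (hh_nonneg : ∀ x ∈ Ici a, 0 ≤ h x)
    (hle : ∀ x ∈ Ioi a, -(K / x ^ (β - 1)) * h x ≤ deriv h x) (hx : a ≤ x) :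
    h a * exp (-(K / (β - 2) * a ^ (2 - β))) ≤ h x := by
  have hβ2 : 0 < β - 2 := by linarith
  set ψ := fun t : ℝ => K / (β - 2) * t ^ (2 - β)
  have hψ' : ∀ t, 0 < t → HasDerivAt ψ (-(K / t ^ (β - 1))) t := fun t ht => by
    refine ((hasDerivAt_rpow_const (Or.inl ht.ne')).const_mul (K / (β - 2))).congr_deriv ?_
    rw [show 2 - β - 1 = -(β - 1) by ring, rpow_neg ht.le]
    field_simp
    ring
  have hmono := monotoneOn_mul_exp_neg (convex_Ici a) (ψ := ψ) hh
    (fun t ht => (hψ' t (ha.trans_le ht)).continuousAt.continuousWithinAt)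
    (fun t ht => (hh'.differentiableAt (Ioi_mem_nhds (interior_Ici.subset ht))).hasDerivAt)
    (fun t ht => hψ' t (ha.trans (interior_Ici.subset ht)))
    (fun t ht => hle t (interior_Ici.subset ht))
  have hψx : 0 ≤ ψ x := by have := rpow_pos_of_pos (ha.trans_le hx) (2 - β); positivity
  calc h a * exp (-ψ a) ≤ h x * exp (-ψ x) := hmono self_mem_Ici hx hx
    _ ≤ h x := mul_le_of_le_one_right (hh_nonneg x hx) (exp_le_one_iff.2 (by linarith))

theorem stmt_13_general (α β lam : ℝ) (hα : 0 < α) (hβ : 2 < β) (hlam : 0 < lam)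
    (g h : ℝ → ℝ)
    (hgdef : ∀ r : ℝ, g r = Real.exp (-(α * r ^ β)))
    (hbdd : ∃ C : ℝ, ∀ r ∈ Set.Ici (10 : ℝ), h r ≤ C)
    (hh : ContDiffOn ℝ 2 h (Set.Ici (10 : ℝ)))
    (hhpos : ∀ r ∈ Set.Ici (10 : ℝ), 0 < h r)
    (hode : ∀ r ∈ Set.Ici (10 : ℝ),
      deriv (deriv h) r + (deriv g r / g r) * deriv h r = lam * h r) :
    StrictAntiOn h (Set.Ici (10 : ℝ)) ∧
    (∃ L : ℝ, 0 < L ∧ Filter.Tendsto h Filter.atTop (nhds L)) ∧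
    ¬ Filter.Tendsto h Filter.atTop (nhds 0) := by
  obtain rfl : g = fun r => exp (-(α * r ^ β)) := funext hgdef
  obtain ⟨C, hC⟩ := hbdd
  have h10 : ∀ x ∈ Ioi (10 : ℝ), 0 < x := fun x hx => lt_trans (by norm_num) hx
  have hcont : ContinuousOn h (Ici 10) := hh.continuousOn
  have hdiff : DifferentiableOn ℝ h (Ioi 10) :=
    (hh.mono Ioi_subset_Ici_self).differentiableOn (by norm_num)
  have hw_le : ∀ x ∈ Ioi (10 : ℝ), exp (-(α * x ^ β)) ≤ 1 := fun x hx =>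
    exp_neg_mul_rpow_le_one hα.le (h10 x hx).le
  have hB : ∀ x ∈ Ioi (10 : ℝ), HasDerivAt (fun t => exp (-(α * t ^ β)) * deriv h t)
      (lam * (exp (-(α * x ^ β)) * h x)) x := fun x hx =>
    hasDerivAt_mul_deriv_of_ode (differentiableAt_exp_neg_mul_rpow (h10 x hx).ne')
      (exp_pos _).ne'
      (hh.differentiableOn_deriv_interior.differentiableAt
        (isOpen_interior.mem_nhds (by rwa [interior_Ici])))
      (hode x hx.out.le)
  have hB_mono := strictMonoOn_mul_deriv hlam (fun x _ => exp_pos _)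
    (fun x hx => hhpos x hx.out.le) hB
  have hderiv : ∀ x ∈ Ioi (10 : ℝ), deriv h x < 0 := fun x hx =>
    deriv_neg_of_strictMonoOn_mul_deriv (fun x _ => exp_pos _) hw_le hcont hdiff
      ⟨C, forall_mem_image.2 hC⟩ hB_mono hx
  have hanti : StrictAntiOn h (Ici 10) :=
    strictAntiOn_of_deriv_neg (convex_Ici 10) hcont fun x hx => hderiv x (interior_Ici.subset hx)
  have hlog : ∀ x ∈ Ioi (10 : ℝ), -(lam / (α * β) / x ^ (β - 1)) * h x ≤ deriv h x :=
    fun x hx => by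
      have := rpow_pos_of_pos (h10 x hx) (β - 1)
      rw [div_div]
      exact neg_div_mul_le_deriv hlam.le (by positivity) hx (fun x _ => exp_pos _) hw_le
        (fun t ht => exp_neg_mul_rpow_le hα.le (by linarith) (h10 x hx) ht)
        hcont hdiff hhpos hderiv hB hB_mono.monotoneOn
  obtain ⟨L, hL, hlim⟩ := hanti.antitoneOn.exists_tendsto_atTop_of_le fun x hx =>
    mul_exp_le_of_neg_div_rpow_mul_le_deriv (by norm_num) hβ (by positivity) hcont hdiff
      (fun x hx => (hhpos x hx).le) hlog hx
  have hL0 : 0 < L := lt_of_lt_of_le (by have := hhpos 10 self_mem_Ici; positivity) hL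
  exact ⟨hanti, ⟨L, hL0, hlim⟩, fun h0 => hL0.ne' (tendsto_nhds_unique hlim h0)⟩

/-- with `g(r) = exp(-α r^β)` (`α > 0`, `β > 2`), a bounded positive
solution of `h'' + (g'/g) h' = λ h` on `[10,∞)` with `h(10) = 1` is strictly
decreasing and converges to a strictly positive limit; in particular `h` does
not tend to `0` (the 2-dimensional model is not Feller). -/
theorem stmt_13 (α β lam : ℝ) (hα : 0 < α) (hβ : 2 < β) (hlam : 0 < lam)
    (g h : ℝ → ℝ)
    (hgdef : ∀ r : ℝ, g r = Real.exp (-(α * r ^ β)))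
    (hbdd : ∃ C : ℝ, ∀ r ∈ Set.Ici (10 : ℝ), h r ≤ C)
    (hh : ContDiffOn ℝ 2 h (Set.Ici (10 : ℝ)))
    (hhpos : ∀ r ∈ Set.Ici (10 : ℝ), 0 < h r)
    (hval : h 10 = 1)
    (hode : ∀ r ∈ Set.Ici (10 : ℝ),
      deriv (deriv h) r + (deriv g r / g r) * deriv h r = lam * h r) :
    StrictAntiOn h (Set.Ici (10 : ℝ)) ∧
    (∃ L : ℝ, 0 < L ∧ Filter.Tendsto h Filter.atTop (nhds L)) ∧
    ¬ Filter.Tendsto h Filter.atTop (nhds 0) :=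
  stmt_13_general α β lam hα hβ hlam g h hgdef hbdd hh hhpos hode
end

section
/- Let m ≥ 2 be an integer and let G : [0, ∞) → ℝ be a twice continuously differentiable, positive, monotone increasing function such that ∫_0^∞ dt/G(t) < +∞ and limsup_{r→∞} G'(r)/G(r)² = α < +∞. Fix β > α and define g : [0, ∞) → ℝ by g(r) = exp(−β·∫_0^r G(t) dt). Then: (a) g^{m-1} is Lebesgue integrable on [0, ∞); and (b) the function r ↦ (∫_r^∞ g(t)^{m-1} dt)/g(r)^{m-1} is Lebesgue integrable on [0, ∞). -/
/-!
For increasing `G > 0` the primitive `F r = ∫₀ʳ G` satisfies `F t ≥ F r + G r * (t - r)`, so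
`exp (-c F)` decays on `[r, ∞)` at least like `exp (-c G(r) (t - r))`. Hence
`∫_r^∞ exp (-c F) ≤ exp (-c F r) / (c G r)`: at `r = 0` this gives (a), and it bounds the quotient
in (b) by `1 / (c G)`, which is integrable. Here `g ^ (m - 1) = exp (-c F)` with `c = (m - 1) β`,
and `c > 0` because `β > α ≥ 0`, `α` being the limsup of the nonnegative `G' / G²`.
-/

open Set MeasureTheory Filter Real Topology

lemma exp_neg_mul_sub_eq (b r t : ℝ) : exp (-b * (t - r)) = exp (b * r) * exp (-b * t) := by
  rw [← exp_add]; ring_nf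

lemma integrableOn_exp_neg_mul_sub_Ioi {b : ℝ} (hb : 0 < b) (r : ℝ) :
    IntegrableOn (fun t => exp (-b * (t - r))) (Ioi r) := by
  simp_rw [exp_neg_mul_sub_eq b r]
  exact (integrableOn_exp_mul_Ioi (neg_lt_zero.mpr hb) r).const_mul _

lemma integral_exp_neg_mul_sub_Ioi {b : ℝ} (hb : 0 < b) (r : ℝ) :
    ∫ t in Ioi r, exp (-b * (t - r)) = b⁻¹ := by
  simp_rw [exp_neg_mul_sub_eq b r, integral_const_mul,
    integral_exp_mul_Ioi (neg_lt_zero.mpr hb)]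
  rw [neg_mul, exp_neg]
  field_simp

lemma integrableOn_Ioi_of_le_mul_exp {f : ℝ → ℝ} {r C b : ℝ} (hb : 0 < b)
    (hf : AEStronglyMeasurable f (volume.restrict (Ioi r)))
    (hf0 : ∀ t ∈ Ioi r, 0 ≤ f t) (hle : ∀ t ∈ Ioi r, f t ≤ C * exp (-b * (t - r))) :
    IntegrableOn f (Ioi r) := by
  refine ((integrableOn_exp_neg_mul_sub_Ioi hb r).const_mul C).mono' hf ?_
  filter_upwards [ae_restrict_mem measurableSet_Ioi] with t ht
  rw [norm_of_nonneg (hf0 t ht)]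
  exact hle t ht

lemma setIntegral_Ioi_le_of_le_mul_exp {f : ℝ → ℝ} {r C b : ℝ} (hb : 0 < b)
    (hf : AEStronglyMeasurable f (volume.restrict (Ioi r)))
    (hf0 : ∀ t ∈ Ioi r, 0 ≤ f t) (hle : ∀ t ∈ Ioi r, f t ≤ C * exp (-b * (t - r))) :
    ∫ t in Ioi r, f t ≤ C / b := by
  calc ∫ t in Ioi r, f t ≤ ∫ t in Ioi r, C * exp (-b * (t - r)) :=
        setIntegral_mono_on (integrableOn_Ioi_of_le_mul_exp hb hf hf0 hle)
          ((integrableOn_exp_neg_mul_sub_Ioi hb r).const_mul C) measurableSet_Ioi hle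
    _ = C / b := by rw [integral_const_mul, integral_exp_neg_mul_sub_Ioi hb, div_eq_mul_inv]

lemma MonotoneOn.deriv_nonneg_of_mem_nhds {f : ℝ → ℝ} {s : Set ℝ} {x : ℝ}
    (hf : MonotoneOn f s) (hs : s ∈ 𝓝 x) : 0 ≤ deriv f x :=
  derivWithin_of_mem_nhds (f := f) hs ▸ hf.derivWithin_nonneg

lemma Real.limsup_nonneg_of_eventually_nonneg {ι : Type*} {l : Filter ι} [l.NeBot]
    {f : ι → ℝ} (hf : ∀ᶠ x in l, 0 ≤ f x) : 0 ≤ limsup f l := by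
  -- no boundedness is needed: an unbounded limsup has the junk value `sInf ∅ = 0`
  rw [limsup_eq]
  refine Real.sInf_nonneg fun a ha => ?_
  obtain ⟨x, hxa, hx0⟩ := (Eventually.and ha hf).exists
  exact hx0.trans hxa

lemma MonotoneOn.mul_sub_le_intervalIntegral {f : ℝ → ℝ} {a b : ℝ} (hf : MonotoneOn f (Icc a b))
    (hab : a ≤ b) : f a * (b - a) ≤ ∫ x in a..b, f x := by
  have hint : IntervalIntegrable f volume a b := (uIcc_of_le hab ▸ hf).intervalIntegrable
  calc f a * (b - a) = ∫ _ in a..b, f a := by simp [mul_comm]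
    _ ≤ ∫ x in a..b, f x := intervalIntegral.integral_mono_on hab intervalIntegrable_const hint
        fun x hx => hf (left_mem_Icc.mpr hab) hx hx.1

noncomputable def expNegMulPrimitive (c : ℝ) (G : ℝ → ℝ) (r : ℝ) : ℝ :=
  exp (-(c * ∫ t in (0 : ℝ)..r, G t))

lemma expNegMulPrimitive_pos (c : ℝ) (G : ℝ → ℝ) (r : ℝ) : 0 < expNegMulPrimitive c G r :=
  exp_pos _

section Decay

variable {G : ℝ → ℝ} {c : ℝ}

lemma MonotoneOn.intervalIntegral_add_mul_sub_le (hG : MonotoneOn G (Ici 0)) {r t : ℝ} (hr : 0 ≤ r)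
    (hrt : r ≤ t) : (∫ s in (0 : ℝ)..r, G s) + G r * (t - r) ≤ ∫ s in (0 : ℝ)..t, G s := by
  have hint : ∀ a b, 0 ≤ a → 0 ≤ b → IntervalIntegrable G volume a b := fun a b ha hb =>
    (hG.mono fun x hx => (le_min ha hb).trans hx.1).intervalIntegrable
  rw [← intervalIntegral.integral_add_adjacent_intervals (hint 0 r le_rfl hr)
    (hint r t hr (hr.trans hrt))]
  gcongr
  exact (hG.mono fun x hx => hr.trans hx.1).mul_sub_le_intervalIntegral hrt

lemma MonotoneOn.expNegMulPrimitive_le (hG : MonotoneOn G (Ici 0)) (hc : 0 ≤ c) {r t : ℝ}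
    (hr : 0 ≤ r) (hrt : r ≤ t) :
    expNegMulPrimitive c G t ≤ expNegMulPrimitive c G r * exp (-(c * G r) * (t - r)) := by
  rw [expNegMulPrimitive, expNegMulPrimitive, ← exp_add, exp_le_exp]
  nlinarith [mul_le_mul_of_nonneg_left (hG.intervalIntegral_add_mul_sub_le hr hrt) hc]

lemma MonotoneOn.antitoneOn_expNegMulPrimitive (hG : MonotoneOn G (Ici 0)) (hc : 0 ≤ c)
    (hGpos : ∀ r ∈ Ici (0 : ℝ), 0 < G r) : AntitoneOn (expNegMulPrimitive c G) (Ici 0) :=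
  fun r hr t _ hrt => (hG.expNegMulPrimitive_le hc hr hrt).trans <|
    mul_le_of_le_one_right (expNegMulPrimitive_pos c G r).le <| exp_le_one_iff.mpr <|
      by nlinarith [mul_nonneg hc (hGpos r hr).le, sub_nonneg.mpr hrt]

lemma MonotoneOn.aestronglyMeasurable_expNegMulPrimitive (hG : MonotoneOn G (Ici 0))
    (hc : 0 ≤ c) (hGpos : ∀ r ∈ Ici (0 : ℝ), 0 < G r) :
    AEStronglyMeasurable (expNegMulPrimitive c G) (volume.restrict (Ici 0)) :=
  (aemeasurable_restrict_of_antitoneOn measurableSet_Ici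
    (hG.antitoneOn_expNegMulPrimitive hc hGpos)).aestronglyMeasurable

lemma MonotoneOn.integrableOn_expNegMulPrimitive (hG : MonotoneOn G (Ici 0)) (hc : 0 < c)
    (hGpos : ∀ r ∈ Ici (0 : ℝ), 0 < G r) : IntegrableOn (expNegMulPrimitive c G) (Ici 0) := by
  rw [integrableOn_Ici_iff_integrableOn_Ioi]
  refine integrableOn_Ioi_of_le_mul_exp (C := 1) (mul_pos hc (hGpos 0 self_mem_Ici))
    ((hG.aestronglyMeasurable_expNegMulPrimitive hc.le hGpos).mono_set Ioi_subset_Ici_self)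
    (fun t _ => (expNegMulPrimitive_pos c G t).le) fun t ht => ?_
  simpa [expNegMulPrimitive] using hG.expNegMulPrimitive_le hc.le le_rfl (le_of_lt ht)

lemma MonotoneOn.integral_Ici_expNegMulPrimitive_le (hG : MonotoneOn G (Ici 0)) (hc : 0 < c)
    (hGpos : ∀ r ∈ Ici (0 : ℝ), 0 < G r) {r : ℝ} (hr : 0 ≤ r) :
    ∫ t in Ici r, expNegMulPrimitive c G t ≤ expNegMulPrimitive c G r / (c * G r) := by
  rw [integral_Ici_eq_integral_Ioi]
  exact setIntegral_Ioi_le_of_le_mul_exp (mul_pos hc (hGpos r hr))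
    ((hG.aestronglyMeasurable_expNegMulPrimitive hc.le hGpos).mono_set
      fun t ht => hr.trans (le_of_lt ht))
    (fun t _ => (expNegMulPrimitive_pos c G t).le)
    fun t ht => hG.expNegMulPrimitive_le hc.le hr (le_of_lt ht)

lemma MonotoneOn.integrableOn_integral_Ici_div_expNegMulPrimitive (hG : MonotoneOn G (Ici 0))
    (hc : 0 < c) (hGpos : ∀ r ∈ Ici (0 : ℝ), 0 < G r)
    (hGint : IntegrableOn (fun t => (G t)⁻¹) (Ici 0)) :
    IntegrableOn (fun r => (∫ t in Ici r, expNegMulPrimitive c G t) / expNegMulPrimitive c G r)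
      (Ici 0) := by
  have hint := hG.integrableOn_expNegMulPrimitive hc hGpos
  have htail : AntitoneOn (fun r => ∫ t in Ici r, expNegMulPrimitive c G t) (Ici 0) :=
    fun r hr t _ hrt => setIntegral_mono_set (hint.mono_set (Ici_subset_Ici.mpr hr))
      (ae_of_all _ fun t => (expNegMulPrimitive_pos c G t).le)
      (Ici_subset_Ici.mpr hrt).eventuallyLE
  have hmeas := ((aemeasurable_restrict_of_antitoneOn measurableSet_Ici htail).div
    (hG.aestronglyMeasurable_expNegMulPrimitive hc.le hGpos).aemeasurable).aestronglyMeasurable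
  refine (hGint.const_mul c⁻¹).mono' hmeas ?_
  filter_upwards [ae_restrict_mem measurableSet_Ici] with r hr
  have hφ := expNegMulPrimitive_pos c G r
  rw [norm_of_nonneg (div_nonneg (setIntegral_nonneg measurableSet_Ici
    fun t _ => (expNegMulPrimitive_pos c G t).le) hφ.le), div_le_iff₀ hφ]
  calc ∫ t in Ici r, expNegMulPrimitive c G t
      ≤ expNegMulPrimitive c G r / (c * G r) := hG.integral_Ici_expNegMulPrimitive_le hc hGpos hr
    _ = c⁻¹ * (G r)⁻¹ * expNegMulPrimitive c G r := by
      rw [div_eq_mul_inv, mul_inv]; ring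

end Decay

theorem stmt_14_general (m : ℕ) (hm : 2 ≤ m) (G : ℝ → ℝ) (α β : ℝ)
    (hGpos : ∀ r ∈ Set.Ici (0 : ℝ), 0 < G r)
    (hGmono : MonotoneOn G (Set.Ici (0 : ℝ)))
    (hGint : MeasureTheory.IntegrableOn (fun t => (G t)⁻¹) (Set.Ici (0 : ℝ)))
    (hlimsup : Filter.limsup (fun r => deriv G r / (G r) ^ 2) Filter.atTop = α)
    (hβ : α < β)
    (g : ℝ → ℝ)
    (hgdef : ∀ r : ℝ, g r = Real.exp (-(β * ∫ t in (0:ℝ)..r, G t))) :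
    MeasureTheory.IntegrableOn (fun r => g r ^ (m - 1)) (Set.Ici (0 : ℝ)) ∧
    MeasureTheory.IntegrableOn
      (fun r => (∫ t in Set.Ici r, g t ^ (m - 1)) / g r ^ (m - 1))
      (Set.Ici (0 : ℝ)) := by
  have hα : 0 ≤ α := hlimsup ▸ Real.limsup_nonneg_of_eventually_nonneg <| by
    filter_upwards [eventually_gt_atTop 0] with r hr
    exact div_nonneg (hGmono.deriv_nonneg_of_mem_nhds (Ici_mem_nhds hr)) (sq_nonneg _)
  have hc : 0 < ((m - 1 : ℕ) : ℝ) * β :=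
    mul_pos (by exact_mod_cast (by omega : 0 < m - 1)) (hα.trans_lt hβ)
  have hpow : ∀ r, g r ^ (m - 1) = expNegMulPrimitive ((m - 1 : ℕ) * β) G r := fun r => by
    rw [hgdef, ← exp_nat_mul, expNegMulPrimitive]; ring_nf
  simp_rw [hpow]
  exact ⟨hGmono.integrableOn_expNegMulPrimitive hc hGpos,
    hGmono.integrableOn_integral_Ici_div_expNegMulPrimitive hc hGpos hGint⟩

/-- sharpness of Hsu's condition: if `G > 0` is increasing with
`1/G` integrable and `limsup G'/G² = α < ∞`, and `β > α`,
`g(r) = exp(-β ∫_0^r G)`, then `g^{m-1}` and `r ↦ (∫_r^∞ g^{m-1})/g(r)^{m-1}`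
are both integrable on `[0,∞)` (so the model `M_g^m` is not Feller). -/
theorem stmt_14 (m : ℕ) (hm : 2 ≤ m) (G : ℝ → ℝ) (α β : ℝ)
    (hG : ContDiffOn ℝ 2 G (Set.Ici (0 : ℝ)))
    (hGpos : ∀ r ∈ Set.Ici (0 : ℝ), 0 < G r)
    (hGmono : MonotoneOn G (Set.Ici (0 : ℝ)))
    (hGint : MeasureTheory.IntegrableOn (fun t => (G t)⁻¹) (Set.Ici (0 : ℝ)))
    (hlimsup : Filter.limsup (fun r => deriv G r / (G r) ^ 2) Filter.atTop = α)
    (hβ : α < β)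
    (g : ℝ → ℝ)
    (hgdef : ∀ r : ℝ, g r = Real.exp (-(β * ∫ t in (0:ℝ)..r, G t))) :
    MeasureTheory.IntegrableOn (fun r => g r ^ (m - 1)) (Set.Ici (0 : ℝ)) ∧
    MeasureTheory.IntegrableOn
      (fun r => (∫ t in Set.Ici r, g t ^ (m - 1)) / g r ^ (m - 1))
      (Set.Ici (0 : ℝ)) :=
  stmt_14_general m hm G α β hGpos hGmono hGint hlimsup hβ g hgdef
end

section
/- Let m ≥ 2 be an integer, R₀ > 0 and λ > 0 real numbers, and g : [R₀, ∞) → ℝ a continuously differentiable function with g(r) > 0 for all r ≥ R₀, such that ∫_{R₀}^∞ g(t)^{m-1} dt = +∞. Let (R_n) be a strictly increasing sequence of reals with R_1 > R₀ and R_n → +∞, and for each n let h_n : [R₀, R_n] → ℝ be twice continuously differentiable with h_n(r) ≥ 0 on [R₀, R_n], h_n(R₀) = 1, h_n(R_n) = 0, and h_n''(r) + (m-1)·(g'(r)/g(r))·h_n'(r) = λ·h_n(r) on [R₀, R_n]. Suppose h : [R₀, ∞) → ℝ is twice continuously differentiable, satisfies h(r) > 0 for all r ≥ R₀, h''(r)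 + (m-1)·(g'(r)/g(r))·h'(r) = λ·h(r) on [R₀, ∞), and h(r) = lim_{n→∞} h_n(r) for every r ≥ R₀. Then h(r) → 0 as r → +∞. -/
/-!
In divergence form the equation reads `(g^k u')' = λ g^k u` with `k = m - 1`, so the flux `g^k u'`
of a nonnegative solution is nondecreasing. For the Dirichlet solutions `h_n` this forces
`h_n' ≤ 0`, since a point with `h_n' > 0` would make `h_n` increase up to `h_n(R_n) = 0`. Hence
the limit `h` is nonincreasing and its flux is nonpositive. If `h` stayed above some `ε > 0`, the
flux would grow at least like `λ ε ∫ g^k` while staying bounded above by `0`, so `g^k` would be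
integrable, contradicting the infinite volume.
-/

open Set MeasureTheory Filter

noncomputable def radialFlux (k : ℕ) (g u : ℝ → ℝ) (r : ℝ) : ℝ := g r ^ k * deriv u r

theorem hasDerivAt_radialFlux {k : ℕ} {lam r : ℝ} {g u : ℝ → ℝ} (hgr : g r ≠ 0)
    (hg : HasDerivAt g (deriv g r) r) (hu : HasDerivAt (deriv u) (deriv (deriv u) r) r)
    (hode : deriv (deriv u) r + (k : ℝ) * (deriv g r / g r) * deriv u r = lam * u r) :
    HasDerivAt (radialFlux k g u) (lam * g r ^ k * u r) r := by
  refine ((hg.fun_pow k).mul hu).congr_deriv ?_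
  rw [eq_sub_of_add_eq hode]
  rcases k with _ | k
  · simp
  · simp only [Nat.cast_add, Nat.cast_one, Nat.add_sub_cancel, pow_succ]
    field_simp
    ring

theorem integrableOn_Ioi_of_hasDerivAt_of_le {F f : ℝ → ℝ} {a C : ℝ}
    (hF : ∀ x ∈ Ici a, HasDerivAt F (f x) x) (hf : ∀ x ∈ Ici a, 0 ≤ f x)
    (hC : ∀ x ∈ Ioi a, F x ≤ C) : IntegrableOn f (Ioi a) := by
  have hcont : ContinuousOn F (Ici a) := fun x hx => (hF x hx).continuousAt.continuousWithinAt
  have hint : ∀ b, IntegrableOn f (Ioc a b) := by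
    intro b
    rcases le_total b a with hba | hab
    · simp [Ioc_eq_empty_of_le hba]
    · exact intervalIntegral.integrableOn_deriv_of_nonneg (hcont.mono Icc_subset_Ici_self)
        (fun x hx => hF x hx.1.le) fun x hx => hf x hx.1.le
  refine integrableOn_Ioi_of_intervalIntegral_norm_bounded (C - F a) a hint tendsto_id ?_
  filter_upwards [eventually_gt_atTop a] with b hb
  calc ∫ x in a..b, ‖f x‖ = ∫ x in a..b, f x := by
        refine intervalIntegral.integral_congr fun x hx => Real.norm_of_nonneg (hf x ?_)
        rw [uIcc_of_le hb.le] at hx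
        exact hx.1
    _ = F b - F a := intervalIntegral.integral_eq_sub_of_hasDerivAt_of_le hb.le
        (hcont.mono Icc_subset_Ici_self) (fun x hx => hF x hx.1.le)
        ((intervalIntegrable_iff_integrableOn_Ioc_of_le hb.le).2 (hint b))
    _ ≤ C - F a := by linarith [hC b hb]

section RadialEquation

variable {k : ℕ} {lam : ℝ} {g u : ℝ → ℝ}

theorem hasDerivAt_radialFlux_of_contDiffOn {U : Set ℝ} (hU : IsOpen U)
    (hg : ContDiffOn ℝ 1 g U) (hg0 : ∀ r ∈ U, g r ≠ 0) (hu : ContDiffOn ℝ 2 u U)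
    (hode : ∀ r ∈ U, deriv (deriv u) r + (k : ℝ) * (deriv g r / g r) * deriv u r = lam * u r)
    {r : ℝ} (hr : r ∈ U) : HasDerivAt (radialFlux k g u) (lam * g r ^ k * u r) r := by
  have hu' : ContDiffOn ℝ 1 (deriv u) U := hu.deriv_of_isOpen hU (by norm_num)
  refine hasDerivAt_radialFlux (hg0 r hr) ?_ ?_ (hode r hr)
  · exact (hg.differentiableOn one_ne_zero r hr |>.differentiableAt (hU.mem_nhds hr)).hasDerivAt
  · exact (hu'.differentiableOn one_ne_zero r hr |>.differentiableAt (hU.mem_nhds hr)).hasDerivAt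

theorem monotoneOn_radialFlux {U : Set ℝ} (hU : IsOpen U) (hUc : Convex ℝ U) (hlam : 0 ≤ lam)
    (hg : ContDiffOn ℝ 1 g U) (hgpos : ∀ r ∈ U, 0 < g r) (hu : ContDiffOn ℝ 2 u U)
    (hunn : ∀ r ∈ U, 0 ≤ u r)
    (hode : ∀ r ∈ U,
      deriv (deriv u) r + (k : ℝ) * (deriv g r / g r) * deriv u r = lam * u r) :
    MonotoneOn (radialFlux k g u) U := by
  have hflux : ∀ r ∈ U, HasDerivAt (radialFlux k g u) (lam * g r ^ k * u r) r :=
    fun _ hr => hasDerivAt_radialFlux_of_contDiffOn hU hg (fun r hr => (hgpos r hr).ne') hu hode hr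
  refine monotoneOn_of_deriv_nonneg hUc (fun r hr => (hflux r hr).continuousAt.continuousWithinAt)
    (fun r hr => (hflux r (interior_subset hr)).differentiableAt.differentiableWithinAt)
    fun r hr => ?_
  rw [hU.interior_eq] at hr
  rw [(hflux r hr).deriv]
  have := hgpos r hr
  have := hunn r hr
  positivity

theorem antitoneOn_of_nonneg_of_eq_zero {R₀ B : ℝ} (hlam : 0 ≤ lam)
    (hg : ContDiffOn ℝ 1 g (Ioo R₀ B)) (hgpos : ∀ r ∈ Ioo R₀ B, 0 < g r)
    (hu : ContDiffOn ℝ 2 u (Icc R₀ B)) (hunn : ∀ r ∈ Icc R₀ B, 0 ≤ u r) (huB : u B = 0)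
    (hode : ∀ r ∈ Ioo R₀ B,
      deriv (deriv u) r + (k : ℝ) * (deriv g r / g r) * deriv u r = lam * u r) :
    AntitoneOn u (Icc R₀ B) := by
  have hu' : ContDiffOn ℝ 2 u (Ioo R₀ B) := hu.mono Ioo_subset_Icc_self
  have hflux := monotoneOn_radialFlux isOpen_Ioo (convex_Ioo R₀ B) hlam hg hgpos hu'
    (fun r hr => hunn r (Ioo_subset_Icc_self hr)) hode
  have hderiv : ∀ r ∈ Ioo R₀ B, deriv u r ≤ 0 := by
    intro r₀ hr₀
    by_contra! hpos
    have hmono : StrictMonoOn u (Icc r₀ B) := by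
      refine strictMonoOn_of_deriv_pos (convex_Icc r₀ B)
        (hu.continuousOn.mono (Icc_subset_Icc_left hr₀.1.le)) fun r hr => ?_
      rw [interior_Icc] at hr
      have hrU : r ∈ Ioo R₀ B := ⟨hr₀.1.trans hr.1, hr.2⟩
      refine (mul_pos_iff_of_pos_left (pow_pos (hgpos r hrU) k)).1 ?_
      calc 0 < radialFlux k g u r₀ := mul_pos (pow_pos (hgpos r₀ hr₀) k) hpos
        _ ≤ radialFlux k g u r := hflux hr₀ hrU hr.1.le
    have := hmono (left_mem_Icc.2 hr₀.2.le) (right_mem_Icc.2 hr₀.2.le) hr₀.2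
    linarith [hunn r₀ (Ioo_subset_Icc_self hr₀)]
  refine antitoneOn_of_deriv_nonpos (convex_Icc R₀ B) hu.continuousOn ?_ ?_ <;>
    rw [interior_Icc]
  · exact hu'.differentiableOn (by norm_num)
  · exact hderiv

theorem integrableOn_pow_of_antitoneOn {R₀ ε : ℝ} (hlam : 0 < lam) (hε : 0 < ε)
    (hg : ContDiffOn ℝ 1 g (Ici R₀)) (hgpos : ∀ r ∈ Ici R₀, 0 < g r)
    (hu : ContDiffOn ℝ 2 u (Ioi R₀)) (hanti : AntitoneOn u (Ioi R₀))
    (huε : ∀ r ∈ Ioi R₀, ε ≤ u r)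
    (hode : ∀ r ∈ Ioi R₀,
      deriv (deriv u) r + (k : ℝ) * (deriv g r / g r) * deriv u r = lam * u r) :
    IntegrableOn (fun r => g r ^ k) (Ici R₀) := by
  have hgk : ∀ r ∈ Ioi R₀, 0 ≤ g r ^ k :=
    fun r hr => pow_nonneg (hgpos r (Ioi_subset_Ici_self hr)).le k
  have hflux : ∀ r ∈ Ioi R₀, HasDerivAt (radialFlux k g u) (lam * g r ^ k * u r) r :=
    fun r hr => hasDerivAt_radialFlux_of_contDiffOn isOpen_Ioi (hg.mono Ioi_subset_Ici_self)
      (fun r hr => (hgpos r (Ioi_subset_Ici_self hr)).ne') hu hode hr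
  have hflux_nonpos : ∀ r ∈ Ioi R₀, radialFlux k g u r ≤ 0 := by
    intro r hr
    refine mul_nonpos_of_nonneg_of_nonpos (hgk r hr) ?_
    rw [← derivWithin_of_isOpen isOpen_Ioi hr]
    exact hanti.derivWithin_nonpos
  have ha' : Ici (R₀ + 1) ⊆ Ioi R₀ := Ici_subset_Ioi.2 (by linarith)
  have ha : Ioi (R₀ + 1) ⊆ Ioi R₀ := Ioi_subset_Ici_self.trans ha'
  have hweighted : IntegrableOn (fun r => lam * g r ^ k * u r) (Ioi (R₀ + 1)) :=
    integrableOn_Ioi_of_hasDerivAt_of_le (fun r hr => hflux r (ha' hr))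
      (fun r hr => mul_nonneg (mul_nonneg hlam.le (hgk r (ha' hr)))
        (hε.le.trans (huε r (ha' hr))))
      fun r hr => hflux_nonpos r (ha hr)
  have htail : IntegrableOn (fun r => g r ^ k) (Ioi (R₀ + 1)) := by
    refine (hweighted.div_const (lam * ε)).mono'
      ((hg.continuousOn.pow k).mono (ha.trans Ioi_subset_Ici_self)
        |>.aestronglyMeasurable measurableSet_Ioi) ?_
    refine (ae_restrict_iff' measurableSet_Ioi).2 (Eventually.of_forall fun r hr => ?_)
    have hgr := hgk r (ha hr)
    have hur := huε r (ha hr)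
    rw [Real.norm_of_nonneg hgr, le_div_iff₀ (by positivity)]
    nlinarith [mul_nonneg (mul_nonneg hlam.le hgr) (sub_nonneg.2 hur)]
  have hhead : IntegrableOn (fun r => g r ^ k) (Icc R₀ (R₀ + 1)) :=
    ((hg.continuousOn.pow k).mono Icc_subset_Ici_self).integrableOn_Icc
  rw [← Icc_union_Ioi_eq_Ici (by linarith : R₀ ≤ R₀ + 1)]
  exact hhead.union htail

end RadialEquation

theorem stmt_18_general (m : ℕ) (hm : 2 ≤ m) (R₀ lam : ℝ) (hlam : 0 < lam)
    (g : ℝ → ℝ)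
    (hg : ContDiffOn ℝ 1 g (Set.Ici R₀))
    (hgpos : ∀ r ∈ Set.Ici R₀, 0 < g r)
    (hgint : ¬ MeasureTheory.IntegrableOn (fun t => g t ^ (m - 1)) (Set.Ici R₀))
    (R : ℕ → ℝ)
    (hRtop : Filter.Tendsto R Filter.atTop Filter.atTop)
    (hseq : ℕ → ℝ → ℝ)
    (hseqC2 : ∀ n, ContDiffOn ℝ 2 (hseq n) (Set.Icc R₀ (R n)))
    (hseqnn : ∀ n, ∀ r ∈ Set.Icc R₀ (R n), 0 ≤ hseq n r)
    (hseqb : ∀ n, hseq n (R n) = 0)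
    (hseqode : ∀ n, ∀ r ∈ Set.Icc R₀ (R n),
      deriv (deriv (hseq n)) r + ((m : ℝ) - 1) * (deriv g r / g r) * deriv (hseq n) r
        = lam * hseq n r)
    (h : ℝ → ℝ)
    (hh : ContDiffOn ℝ 2 h (Set.Ici R₀))
    (hhpos : ∀ r ∈ Set.Ici R₀, 0 < h r)
    (hode : ∀ r ∈ Set.Ici R₀,
      deriv (deriv h) r + ((m : ℝ) - 1) * (deriv g r / g r) * deriv h r = lam * h r)
    (hlim : ∀ r ∈ Set.Ici R₀,
      Filter.Tendsto (fun n => hseq n r) Filter.atTop (nhds (h r))) :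
    Filter.Tendsto h Filter.atTop (nhds 0) := by
  have hcoef : ((m - 1 : ℕ) : ℝ) = (m : ℝ) - 1 := by
    rw [Nat.cast_sub (by omega), Nat.cast_one]
  have hIoo : ∀ B, Ioo R₀ B ⊆ Ici R₀ :=
    fun _ => Ioo_subset_Ioi_self.trans Ioi_subset_Ici_self
  have hanti : AntitoneOn h (Ici R₀) := by
    intro x hx y hy hxy
    refine le_of_tendsto_of_tendsto (hlim y hy) (hlim x hx) ?_
    filter_upwards [hRtop.eventually_ge_atTop y] with n hn
    refine antitoneOn_of_nonneg_of_eq_zero (k := m - 1) hlam.le (hg.mono (hIoo _))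
      (fun r hr => hgpos r (hIoo _ hr)) (hseqC2 n) (hseqnn n) (hseqb n) (fun r hr => ?_)
      ⟨hx, hxy.trans hn⟩ ⟨hy, hn⟩ hxy
    rw [hcoef]
    exact hseqode n r (Ioo_subset_Icc_self hr)
  refine tendsto_order.2 ⟨fun a ha => ?_, fun ε hε => ?_⟩
  · filter_upwards [eventually_ge_atTop R₀] with r hr using ha.trans (hhpos r hr)
  · by_contra hfreq
    have hε_le : ∀ r ∈ Ioi R₀, ε ≤ h r := by
      intro r hr
      obtain ⟨s, hs, hrs⟩ :=
        ((not_eventually.1 hfreq).and_eventually (eventually_ge_atTop r)).exists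
      exact (not_lt.1 hs).trans (hanti (Ioi_subset_Ici_self hr) (hr.out.le.trans hrs) hrs)
    refine hgint (integrableOn_pow_of_antitoneOn hlam hε hg hgpos
      (hh.mono Ioi_subset_Ici_self) (hanti.mono Ioi_subset_Ici_self) hε_le fun r hr => ?_)
    rw [hcoef]
    exact hode r (Ioi_subset_Ici_self hr)

/-- every model manifold with infinite volume (`∫ g^{m-1} = ∞`)
is Feller: the minimal positive solution `h` of the exterior problem, obtained
as limit of the Dirichlet solutions `hseq n`, tends to `0` at infinity. -/
theorem stmt_18 (m : ℕ) (hm : 2 ≤ m) (R₀ lam : ℝ) (hR₀ : 0 < R₀) (hlam : 0 < lam)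
    (g : ℝ → ℝ)
    (hg : ContDiffOn ℝ 1 g (Set.Ici R₀))
    (hgpos : ∀ r ∈ Set.Ici R₀, 0 < g r)
    (hgint : ¬ MeasureTheory.IntegrableOn (fun t => g t ^ (m - 1)) (Set.Ici R₀))
    (R : ℕ → ℝ) (hRmono : StrictMono R) (hR1 : R₀ < R 1)
    (hRtop : Filter.Tendsto R Filter.atTop Filter.atTop)
    (hseq : ℕ → ℝ → ℝ)
    (hseqC2 : ∀ n, ContDiffOn ℝ 2 (hseq n) (Set.Icc R₀ (R n)))
    (hseqnn : ∀ n, ∀ r ∈ Set.Icc R₀ (R n), 0 ≤ hseq n r)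
    (hseqa : ∀ n, hseq n R₀ = 1)
    (hseqb : ∀ n, hseq n (R n) = 0)
    (hseqode : ∀ n, ∀ r ∈ Set.Icc R₀ (R n),
      deriv (deriv (hseq n)) r + ((m : ℝ) - 1) * (deriv g r / g r) * deriv (hseq n) r
        = lam * hseq n r)
    (h : ℝ → ℝ)
    (hh : ContDiffOn ℝ 2 h (Set.Ici R₀))
    (hhpos : ∀ r ∈ Set.Ici R₀, 0 < h r)
    (hode : ∀ r ∈ Set.Ici R₀,
      deriv (deriv h) r + ((m : ℝ) - 1) * (deriv g r / g r) * deriv h r = lam * h r)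
    (hlim : ∀ r ∈ Set.Ici R₀,
      Filter.Tendsto (fun n => hseq n r) Filter.atTop (nhds (h r))) :
    Filter.Tendsto h Filter.atTop (nhds 0) :=
  stmt_18_general m hm R₀ lam hlam g hg hgpos hgint R hRtop hseq hseqC2 hseqnn hseqb hseqode h hh
    hhpos hode hlim
end

section
/- Let m ≥ 2 be an integer, R₀ > 0 and λ > 0 real numbers, and g : [R₀, ∞) → ℝ a continuously differentiable function with g(r) > 0 for all r ≥ R₀, such that ∫_{R₀}^∞ g(t)^{1-m} dt < +∞. Let (R_n) be a strictly increasing sequence of reals with R_1 > R₀ and R_n → +∞, and for each n let h_n : [R₀, R_n] → ℝ be twice continuously differentiable with h_n(r) ≥ 0 on [R₀, R_n], h_n(R₀) = 1, h_n(R_n) = 0, and h_n''(r) + (m-1)·(g'(r)/g(r))·h_n'(r) = λ·h_n(r) on [R₀, R_n]. Suppose h : [R₀, ∞) → ℝ satisfies h(r) = lim_{n→∞} h_n(r) for every r ≥ R₀. Then for every r ≥ R₀, h(r) ≤ (∫_r^∞ g(t)^{1-m} dt)/(∫_{R₀}^∞ g(t)^{1-m} dt); in particular h(r) → 0 as r →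 +∞. -/
/-!
Written in terms of the flux `g^{m-1} hₙ'`, the equation reads `(g^{m-1} hₙ')' = λ g^{m-1} hₙ ≥ 0`,
so `hₙ` is dominated by the solution `v` of `(g^{m-1} v')' = 0` with the same boundary values,
`v(r) = (∫_r^{Rₙ} g^{1-m}) / (∫_{R₀}^{Rₙ} g^{1-m})`: the derivative of `hₙ - v` is `g^{1-m}` times
a nondecreasing function, so `hₙ - v` first decreases and then increases and cannot exceed its
boundary values `0`. Letting `n → ∞` gives the bound by the normalized Green kernel, which tends
to `0` because `g^{1-m}` is integrable.
-/

open Set MeasureTheory Filter Topology intervalIntegral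

theorem le_max_of_hasDerivAt_mul_monotoneOn {a b : ℝ} {w f ψ : ℝ → ℝ}
    (hw : ContinuousOn w (Icc a b)) (hw' : ∀ x ∈ Ioo a b, HasDerivAt w (f x * ψ x) x)
    (hf : ∀ x ∈ Ioo a b, 0 ≤ f x) (hψ : MonotoneOn ψ (Ioo a b)) {x : ℝ} (hx : x ∈ Icc a b) :
    w x ≤ max (w a) (w b) := by
  rcases hx.1.eq_or_lt with rfl | hax
  · exact le_max_left _ _
  rcases hx.2.eq_or_lt with rfl | hxb
  · exact le_max_right _ _
  have hxI : x ∈ Ioo a b := ⟨hax, hxb⟩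
  rcases le_total (ψ x) 0 with hψx | hψx
  · have hanti : AntitoneOn w (Icc a x) := by
      refine antitoneOn_of_hasDerivWithinAt_nonpos (f' := fun y => f y * ψ y) (convex_Icc a x)
        (hw.mono (Icc_subset_Icc_right hxb.le)) (fun y hy => ?_) (fun y hy => ?_) <;>
        rw [interior_Icc] at hy <;> have hyI : y ∈ Ioo a b := ⟨hy.1, hy.2.trans hxb⟩
      · exact (hw' y hyI).hasDerivWithinAt
      · exact mul_nonpos_of_nonneg_of_nonpos (hf y hyI) ((hψ hyI hxI hy.2.le).trans hψx)
    exact (hanti ⟨le_rfl, hax.le⟩ ⟨hax.le, le_rfl⟩ hax.le).trans (le_max_left _ _)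
  · have hmono : MonotoneOn w (Icc x b) := by
      refine monotoneOn_of_hasDerivWithinAt_nonneg (f' := fun y => f y * ψ y) (convex_Icc x b)
        (hw.mono (Icc_subset_Icc_left hax.le)) (fun y hy => ?_) (fun y hy => ?_) <;>
        rw [interior_Icc] at hy <;> have hyI : y ∈ Ioo a b := ⟨hax.trans hy.1, hy.2⟩
      · exact (hw' y hyI).hasDerivWithinAt
      · exact mul_nonneg (hf y hyI) (hψx.trans (hψ hxI hyI hy.1.le))
    exact (hmono ⟨le_rfl, hxb.le⟩ ⟨hxb.le, le_rfl⟩ hxb.le).trans (le_max_right _ _)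

/-- Comparison with the solution of `(p v')' = 0`, `v a = 1`, `v b = 0`. -/
theorem le_integral_inv_div_of_monotoneOn_mul_deriv {a b : ℝ} (hab : a < b) {p H : ℝ → ℝ}
    (hp : ContinuousOn p (Icc a b)) (hp_pos : ∀ x ∈ Icc a b, 0 < p x)
    (hH : ContinuousOn H (Icc a b)) (hH' : DifferentiableOn ℝ H (Ioo a b))
    (hflux : MonotoneOn (fun x => p x * deriv H x) (Ioo a b)) (ha : H a = 1) (hb : H b = 0)
    {r : ℝ} (hr : r ∈ Icc a b) :
    H r ≤ (∫ t in r..b, (p t)⁻¹) / ∫ t in a..b, (p t)⁻¹ := by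
  have hf : ContinuousOn (fun t => (p t)⁻¹) (Icc a b) := hp.inv₀ fun x hx => (hp_pos x hx).ne'
  set J := ∫ t in a..b, (p t)⁻¹
  have hJ : 0 < J := intervalIntegral_pos_of_pos_on (hf.intervalIntegrable_of_Icc hab.le)
    (fun x hx => inv_pos.2 (hp_pos x (Ioo_subset_Icc_self hx))) hab
  set v : ℝ → ℝ := fun r => (∫ t in r..b, (p t)⁻¹) / J
  have hv : ContinuousOn v (Icc a b) := by
    have := continuousOn_primitive_interval_left (μ := volume)
      (hf.integrableOn_Icc.mono_set (uIcc_of_le hab.le).subset)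
    rw [uIcc_of_le hab.le] at this
    exact this.div_const J
  have hv' : ∀ x ∈ Ioo a b, HasDerivAt v (-(p x)⁻¹ / J) x := by
    intro x hx
    have hint : IntervalIntegrable (fun t => (p t)⁻¹) volume x b :=
      (hf.mono (Icc_subset_Icc_left hx.1.le)).intervalIntegrable_of_Icc hx.2.le
    exact (integral_hasDerivAt_left hint
      ((hf.mono Ioo_subset_Icc_self).stronglyMeasurableAtFilter isOpen_Ioo x hx)
      (hf.continuousAt (Icc_mem_nhds hx.1 hx.2))).div_const J
  have hw' : ∀ x ∈ Ioo a b,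
      HasDerivAt (fun x => H x - v x) ((p x)⁻¹ * (p x * deriv H x + J⁻¹)) x := by
    intro x hx
    refine ((hH'.differentiableAt (isOpen_Ioo.mem_nhds hx)).hasDerivAt.sub
      (hv' x hx)).congr_deriv ?_
    rw [mul_add, ← mul_assoc, inv_mul_cancel₀ (hp_pos x (Ioo_subset_Icc_self hx)).ne']
    ring
  have hmax := le_max_of_hasDerivAt_mul_monotoneOn (w := fun x => H x - v x) (hH.sub hv) hw'
    (fun x hx => (inv_pos.2 (hp_pos x (Ioo_subset_Icc_self hx))).le) (hflux.add_const J⁻¹) hr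
  have hva : v a = 1 := div_self hJ.ne'
  have hvb : v b = 0 := by simp [v]
  rw [ha, hb, hva, hvb] at hmax
  simpa only [sub_self, max_self, sub_nonpos] using hmax

theorem ContDiffOn.hasDerivAt_deriv_of_isOpen {𝕜 F : Type*} [NontriviallyNormedField 𝕜]
    [NormedAddCommGroup F] [NormedSpace 𝕜 F] {s : Set 𝕜} {H : 𝕜 → F} (hs : IsOpen s)
    (hH : ContDiffOn 𝕜 2 H s) {x : 𝕜} (hx : x ∈ s) :
    HasDerivAt (deriv H) (deriv (deriv H) x) x :=
  have hH' := ((contDiffOn_succ_iff_deriv_of_isOpen (n := 1) hs).1 hH).2.2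
  ((hH'.differentiableOn one_ne_zero).differentiableAt (hs.mem_nhds hx)).hasDerivAt

theorem monotoneOn_pow_mul_deriv_of_ode {k : ℕ} {lam a b : ℝ} (hlam : 0 ≤ lam) {g H : ℝ → ℝ}
    (hg : ContDiffOn ℝ 1 g (Ioo a b)) (hg_pos : ∀ x ∈ Ioo a b, 0 < g x)
    (hH : ContDiffOn ℝ 2 H (Ioo a b)) (hH_nonneg : ∀ x ∈ Ioo a b, 0 ≤ H x)
    (hode : ∀ x ∈ Ioo a b,
      deriv (deriv H) x + (k : ℝ) * (deriv g x / g x) * deriv H x = lam * H x) :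
    MonotoneOn (fun x => g x ^ k * deriv H x) (Ioo a b) := by
  have hderiv : ∀ x ∈ Ioo a b,
      HasDerivAt (fun x => g x ^ k * deriv H x) (g x ^ k * (lam * H x)) x := by
    intro x hx
    have hgx : HasDerivAt g (deriv g x) x :=
      ((hg.differentiableOn one_ne_zero).differentiableAt (isOpen_Ioo.mem_nhds hx)).hasDerivAt
    refine ((hgx.fun_pow k).mul (hH.hasDerivAt_deriv_of_isOpen isOpen_Ioo hx)).congr_deriv ?_
    have hgx0 := (hg_pos x hx).ne'
    rw [← hode x hx]
    rcases k with _ | k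
    · simp
    · simp only [Nat.add_sub_cancel, pow_succ]
      field_simp
      ring
  refine monotoneOn_of_hasDerivWithinAt_nonneg (f' := fun x => g x ^ k * (lam * H x))
    (convex_Ioo a b)
    (fun x hx => (hderiv x hx).continuousAt.continuousWithinAt) (fun x hx => ?_) (fun x hx => ?_)
    <;> rw [interior_Ioo] at hx
  · exact (hderiv x hx).hasDerivWithinAt
  · exact mul_nonneg (pow_nonneg (hg_pos x hx).le k) (mul_nonneg hlam (hH_nonneg x hx))

theorem le_integral_div_of_ode {k : ℕ} {lam a b : ℝ} (hlam : 0 ≤ lam) (hab : a < b)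
    {g H : ℝ → ℝ} (hg : ContDiffOn ℝ 1 g (Icc a b)) (hg_pos : ∀ x ∈ Icc a b, 0 < g x)
    (hH : ContDiffOn ℝ 2 H (Icc a b)) (hH_nonneg : ∀ x ∈ Ioo a b, 0 ≤ H x)
    (ha : H a = 1) (hb : H b = 0)
    (hode : ∀ x ∈ Ioo a b,
      deriv (deriv H) x + (k : ℝ) * (deriv g x / g x) * deriv H x = lam * H x)
    {r : ℝ} (hr : r ∈ Icc a b) :
    H r ≤ (∫ t in r..b, (g t ^ k)⁻¹) / ∫ t in a..b, (g t ^ k)⁻¹ :=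
  le_integral_inv_div_of_monotoneOn_mul_deriv hab (hg.continuousOn.pow k)
    (fun x hx => pow_pos (hg_pos x hx) k) hH.continuousOn
    ((hH.mono Ioo_subset_Icc_self).differentiableOn two_ne_zero)
    (monotoneOn_pow_mul_deriv_of_ode hlam (hg.mono Ioo_subset_Icc_self)
      (fun x hx => hg_pos x (Ioo_subset_Icc_self hx)) (hH.mono Ioo_subset_Icc_self)
      hH_nonneg hode) ha hb hr

theorem setIntegral_Ici_pos {f : ℝ → ℝ} {a : ℝ} (hf : IntegrableOn f (Ici a))
    (hf_pos : ∀ x ∈ Ici a, 0 < f x) : 0 < ∫ x in Ici a, f x := by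
  have hsupp : Function.support f ∩ Ici a = Ici a :=
    inter_eq_right.2 fun x hx => (hf_pos x hx).ne'
  rw [setIntegral_pos_iff_support_of_nonneg_ae
    ((ae_restrict_iff' measurableSet_Ici).2 (.of_forall fun x hx => (hf_pos x hx).le)) hf,
    hsupp, Real.volume_Ici]
  exact ENNReal.zero_lt_top

theorem tendsto_setIntegral_Ici_atTop_zero {E : Type*} [NormedAddCommGroup E] [NormedSpace ℝ E]
    {μ : Measure ℝ} {f : ℝ → E} {a : ℝ} (hf : IntegrableOn f (Ici a) μ) :
    Tendsto (fun r => ∫ x in Ici r, f x ∂μ) atTop (𝓝 0) := by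
  have hempty : ⋂ r : ℝ, Ici r = ∅ :=
    not_nonempty_iff_eq_empty.1 (nonempty_iInter_Ici_iff.not.2 (by simp [not_bddAbove_univ]))
  simpa [hempty] using tendsto_setIntegral_of_antitone (μ := μ) (fun r => measurableSet_Ici)
    (fun _ _ hrs => Ici_subset_Ici.2 hrs) ⟨a, hf⟩

theorem stmt_19_general (m : ℕ) (hm : 2 ≤ m) (R₀ lam : ℝ) (hlam : 0 < lam)
    (g : ℝ → ℝ)
    (hg : ContDiffOn ℝ 1 g (Set.Ici R₀))
    (hgpos : ∀ r ∈ Set.Ici R₀, 0 < g r)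
    (hgint : MeasureTheory.IntegrableOn (fun t => (g t ^ (m - 1))⁻¹) (Set.Ici R₀))
    (R : ℕ → ℝ)
    (hRtop : Filter.Tendsto R Filter.atTop Filter.atTop)
    (hseq : ℕ → ℝ → ℝ)
    (hseqC2 : ∀ n, ContDiffOn ℝ 2 (hseq n) (Set.Icc R₀ (R n)))
    (hseqnn : ∀ n, ∀ r ∈ Set.Icc R₀ (R n), 0 ≤ hseq n r)
    (hseqa : ∀ n, hseq n R₀ = 1)
    (hseqb : ∀ n, hseq n (R n) = 0)
    (hseqode : ∀ n, ∀ r ∈ Set.Icc R₀ (R n),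
      deriv (deriv (hseq n)) r + ((m : ℝ) - 1) * (deriv g r / g r) * deriv (hseq n) r
        = lam * hseq n r)
    (h : ℝ → ℝ)
    (hlim : ∀ r ∈ Set.Ici R₀,
      Filter.Tendsto (fun n => hseq n r) Filter.atTop (nhds (h r))) :
    (∀ r ∈ Set.Ici R₀,
      h r ≤ (∫ t in Set.Ici r, (g t ^ (m - 1))⁻¹) /
            (∫ t in Set.Ici R₀, (g t ^ (m - 1))⁻¹)) ∧
    Filter.Tendsto h Filter.atTop (nhds 0) := by
  have hk : ((m - 1 : ℕ) : ℝ) = (m : ℝ) - 1 := by rw [Nat.cast_sub (by omega), Nat.cast_one]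
  have hgreen : ∀ r ∈ Ici R₀, Tendsto (fun n => ∫ t in r..R n, (g t ^ (m - 1))⁻¹) atTop
      (𝓝 (∫ t in Ici r, (g t ^ (m - 1))⁻¹)) := fun r hr => by
    rw [integral_Ici_eq_integral_Ioi]
    exact intervalIntegral_tendsto_integral_Ioi r (hgint.mono_set (Ioi_subset_Ici hr)) hRtop
  have hG_pos : 0 < ∫ t in Ici R₀, (g t ^ (m - 1))⁻¹ :=
    setIntegral_Ici_pos hgint fun x hx => inv_pos.2 (pow_pos (hgpos x hx) _)
  have hbound : ∀ r ∈ Ici R₀, h r ≤ (∫ t in Ici r, (g t ^ (m - 1))⁻¹) /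
      ∫ t in Ici R₀, (g t ^ (m - 1))⁻¹ := fun r hr => by
    refine le_of_tendsto_of_tendsto (hlim r hr)
      ((hgreen r hr).div (hgreen R₀ self_mem_Ici) hG_pos.ne') ?_
    filter_upwards [hRtop.eventually_gt_atTop r] with n hn
    exact le_integral_div_of_ode hlam.le (lt_of_le_of_lt hr hn) (hg.mono Icc_subset_Ici_self)
      (fun x hx => hgpos x hx.1) (hseqC2 n)
      (fun x hx => hseqnn n x (Ioo_subset_Icc_self hx)) (hseqa n) (hseqb n)
      (fun x hx => hk ▸ hseqode n x (Ioo_subset_Icc_self hx)) ⟨hr, hn.le⟩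
  have h_nonneg : ∀ r ∈ Ici R₀, 0 ≤ h r := fun r hr =>
    ge_of_tendsto (hlim r hr)
      ((hRtop.eventually_ge_atTop r).mono fun n hn => hseqnn n r ⟨hr, hn⟩)
  refine ⟨hbound, tendsto_of_tendsto_of_tendsto_of_le_of_le' tendsto_const_nhds
    (by simpa using (tendsto_setIntegral_Ici_atTop_zero hgint).div_const _)
    ((eventually_ge_atTop R₀).mono h_nonneg) ((eventually_ge_atTop R₀).mono hbound)⟩

/-- every non-parabolic model (`∫ g^{1-m} < ∞`) is Feller: the limit
`h` of the Dirichlet solutions is dominated by the normalized Green kernel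
`r ↦ (∫_r^∞ g^{1-m})/(∫_{R₀}^∞ g^{1-m})`, and in particular `h → 0` at infinity. -/
theorem stmt_19 (m : ℕ) (hm : 2 ≤ m) (R₀ lam : ℝ) (hR₀ : 0 < R₀) (hlam : 0 < lam)
    (g : ℝ → ℝ)
    (hg : ContDiffOn ℝ 1 g (Set.Ici R₀))
    (hgpos : ∀ r ∈ Set.Ici R₀, 0 < g r)
    (hgint : MeasureTheory.IntegrableOn (fun t => (g t ^ (m - 1))⁻¹) (Set.Ici R₀))
    (R : ℕ → ℝ) (hRmono : StrictMono R) (hR1 : R₀ < R 1)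
    (hRtop : Filter.Tendsto R Filter.atTop Filter.atTop)
    (hseq : ℕ → ℝ → ℝ)
    (hseqC2 : ∀ n, ContDiffOn ℝ 2 (hseq n) (Set.Icc R₀ (R n)))
    (hseqnn : ∀ n, ∀ r ∈ Set.Icc R₀ (R n), 0 ≤ hseq n r)
    (hseqa : ∀ n, hseq n R₀ = 1)
    (hseqb : ∀ n, hseq n (R n) = 0)
    (hseqode : ∀ n, ∀ r ∈ Set.Icc R₀ (R n),
      deriv (deriv (hseq n)) r + ((m : ℝ) - 1) * (deriv g r / g r) * deriv (hseq n) r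
        = lam * hseq n r)
    (h : ℝ → ℝ)
    (hlim : ∀ r ∈ Set.Ici R₀,
      Filter.Tendsto (fun n => hseq n r) Filter.atTop (nhds (h r))) :
    (∀ r ∈ Set.Ici R₀,
      h r ≤ (∫ t in Set.Ici r, (g t ^ (m - 1))⁻¹) /
            (∫ t in Set.Ici R₀, (g t ^ (m - 1))⁻¹)) ∧
    Filter.Tendsto h Filter.atTop (nhds 0) :=
  stmt_19_general m hm R₀ lam hlam g hg hgpos hgint R hRtop hseq hseqC2 hseqnn hseqa hseqb hseqode h
    hlim
end
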